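/- arXiv:math/9805148 — 11 statements merged into one kernel-verified Lean document; each statement's English description precedes it below -/
import Mathlib

section
/- Let X ⊆ 2^ω be a subgroup of (2^ω, +) that is topologically dense in 2^ω. Then X is strongly meager if and only if every selector of the cosets of X — that is, every set S ⊆ 2^ω that meets each coset y + X in exactly one point — is not μ-measurable (not measurable with respect to the completion of μ). -/
open MeasureTheory Set Pointwise
open scoped ENNReal

/-- The Cantor space `2^ω = ℕ → ZMod 2`, with coordinatewise addition mod 2. -/
abbrev Cantor : Type := ℕ → ZMod 2

/-- The Haar probability measure on the Cantor space (equivalently, the product of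
uniform measures on `ZMod 2`).  Applied to an arbitrary set it gives the outer measure,
so `μ H = 0` says that `H` has outer measure zero, i.e. `H` is null. -/
noncomputable def μ : Measure Cantor :=
  Measure.addHaarMeasure ⟨⟨Set.univ, isCompact_univ⟩, by simp⟩

/-- A set `X ⊆ 2^ω` is strongly meager if `X + H ≠ 2^ω` for every null set `H`. -/
def StronglyMeager (X : Set Cantor) : Prop :=
  ∀ H : Set Cantor, μ H = 0 → X + H ≠ Set.univ

lemma Cantor.add_self (a : Cantor) : a + a = 0 := by
  funext n; exact CharTwo.add_self_eq_zero _

lemma Cantor.neg_eq (a : Cantor) : -a = a :=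
  neg_eq_of_add_eq_zero_left (Cantor.add_self a)

lemma Cantor.sub_eq_add (a b : Cantor) : a - b = a + b := by
  rw [sub_eq_add_neg, Cantor.neg_eq]

lemma Cantor.add_add_cancel_left (a b : Cantor) : a + (a + b) = b := by
  rw [← add_assoc, Cantor.add_self, zero_add]

lemma Cantor.add_add_cancel_right (a b : Cantor) : a + b + b = a := by
  rw [add_assoc, Cantor.add_self, add_zero]

instance : μ.IsAddHaarMeasure := by unfold μ; infer_instance
instance : μ.InnerRegular := by unfold μ; infer_instance

lemma mem_coset_iff (X : AddSubgroup Cantor) (y s : Cantor) :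
    s ∈ ({y} + (X : Set Cantor)) ↔ s + y ∈ X := by
  rw [Set.mem_add]
  constructor
  · rintro ⟨a, rfl, b, hb, rfl⟩
    rwa [add_comm, Cantor.add_add_cancel_left]
  · intro h
    exact ⟨y, rfl, s + y, h, by rw [add_comm s y, Cantor.add_add_cancel_left]⟩

/-- (Reclaw) For a dense subgroup `X` of `(2^ω, +)`: `X` is strongly meager iff every
selector of the cosets of `X` is nonmeasurable (w.r.t. the completion of `μ`). -/
theorem stronglyMeager_iff_selectors_nonmeasurable
    (X : AddSubgroup Cantor) (hX : Dense (X : Set Cantor)) :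
    StronglyMeager (X : Set Cantor) ↔
      ∀ S : Set Cantor,
        (∀ y : Cantor, ∃! s, s ∈ S ∩ ({y} + (X : Set Cantor))) →
        ¬ NullMeasurableSet S μ := by
  constructor
  · intro hSM S hS hmeas
    by_cases hz : μ S = 0
    · -- X + S = univ contradicts strong meagerness
      refine hSM S hz ?_
      ext y
      simp only [Set.mem_univ, iff_true, Set.mem_add]
      obtain ⟨s, ⟨hsS, hsC⟩, -⟩ := hS y
      rw [mem_coset_iff] at hsC
      exact ⟨s + y, hsC, s, hsS, by
        rw [add_comm s y, Cantor.add_add_cancel_right]⟩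
    · -- positive measure: Steinhaus gives nonzero element of X in S - S, contradiction
      obtain ⟨T, hTS, hTmeas, hTae⟩ := hmeas.exists_measurable_subset_ae_eq
      have hTpos : 0 < μ T := by
        rw [measure_congr hTae]
        exact pos_iff_ne_zero.2 hz
      have hnhds : T - T ∈ nhds (0 : Cantor) :=
        MeasureTheory.Measure.sub_mem_nhds_zero_of_addHaar_pos μ T hTmeas hTpos
      obtain ⟨V, hVsub, hVopen, hV0⟩ := mem_nhds_iff.1 hnhds
      -- find a nonzero point of V
      have hne : (V \ {0}).Nonempty := by
        have htend : Filter.Tendsto (fun n => Pi.single n (1 : ZMod 2) : ℕ → Cantor)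
            Filter.atTop (nhds 0) := by
          rw [tendsto_pi_nhds]
          intro k
          refine Filter.Tendsto.congr' ?_ tendsto_const_nhds
          filter_upwards [Filter.eventually_gt_atTop k] with n hn
          simp [Pi.single_eq_of_ne (show k ≠ n by omega)]
        obtain ⟨n, hn⟩ := (htend.eventually (hVopen.mem_nhds hV0)).exists
        refine ⟨Pi.single n (1 : ZMod 2), hn, ?_⟩
        simp only [Set.mem_singleton_iff]
        intro h
        have := congrFun h n
        simp at this
      obtain ⟨x, hxX, hxV⟩ := hX.exists_mem_open (hVopen.sdiff isClosed_singleton) hne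
      -- x ∈ T - T with x ∈ X, x ≠ 0 : contradiction with selector uniqueness
      have hxTT : x ∈ T - T := hVsub hxV.1
      rw [Set.mem_sub] at hxTT
      obtain ⟨a, ha, b, hb, hab⟩ := hxTT
      rw [Cantor.sub_eq_add] at hab
      have haS : a ∈ S := hTS ha
      have hbS : b ∈ S := hTS hb
      obtain ⟨s, -, hsuniq⟩ := hS b
      have h1 : a = s := hsuniq a ⟨haS, (mem_coset_iff X b a).2 (hab ▸ hxX)⟩
      have h2 : b = s := hsuniq b ⟨hbS, (mem_coset_iff X b b).2 (by
        rw [Cantor.add_self]; exact X.zero_mem)⟩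
      refine hxV.2 ?_
      rw [← hab, h1.trans h2.symm, Cantor.add_self]
      rfl
  · intro hsel H hH hcov
    -- build a selector inside H via the quotient
    have hrep : ∀ q : Cantor ⧸ X, ∃ h : Cantor, h ∈ H ∧ QuotientAddGroup.mk h = q := by
      intro q
      obtain ⟨y, rfl⟩ := QuotientAddGroup.mk_surjective q
      have hmem : y ∈ (X : Set Cantor) + H := hcov ▸ Set.mem_univ y
      rw [Set.mem_add] at hmem
      obtain ⟨x, hx, h, hh, hxh⟩ := hmem
      refine ⟨h, hh, ?_⟩
      rw [QuotientAddGroup.eq, Cantor.neg_eq]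
      have : h + y = x := by
        rw [← hxh, add_comm x h, Cantor.add_add_cancel_left]
      rw [this]; exact hx
    choose f hfH hfq using hrep
    set S : Set Cantor := Set.range f with hSdef
    have hcoset : ∀ y s : Cantor, s ∈ ({y} + (X : Set Cantor)) ↔
        QuotientAddGroup.mk s = (QuotientAddGroup.mk y : Cantor ⧸ X) := by
      intro y s
      rw [mem_coset_iff, QuotientAddGroup.eq, Cantor.neg_eq, add_comm]
    have hselS : ∀ y : Cantor, ∃! s, s ∈ S ∩ ({y} + (X : Set Cantor)) := by
      intro y
      refine ⟨f (QuotientAddGroup.mk y), ⟨⟨_, rfl⟩, (hcoset y _).2 (hfq _)⟩, ?_⟩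
      rintro s ⟨⟨q, rfl⟩, hs⟩
      rw [hcoset] at hs
      have hq : q = QuotientAddGroup.mk y := (hfq q).symm.trans hs
      rw [hq]
    have hSnull : μ S = 0 := by
      refine measure_mono_null ?_ hH
      rintro s ⟨q, rfl⟩; exact hfH q
    exact hsel S hselS (NullMeasurableSet.of_null hSnull)
end

section
/- Let X ⊆ 2^ω be a subgroup of (2^ω, +) that is topologically dense in 2^ω. Then X has strong measure zero if and only if every selector of the cosets of X — that is, every set S ⊆ 2^ω that meets each coset y + X in exactly one point — does not have the Baire property. -/
open MeasureTheory Set Pointwise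
open scoped ENNReal

open Classical in
/-- The standard metric on the Cantor space: `d(x,y) = 2^{-min{n : x n ≠ y n}}`,
and `d(x,x) = 0`. -/
noncomputable def cdist (x y : Cantor) : ℝ :=
  if h : x = y then 0 else (2 : ℝ) ^ (-(Nat.find (Function.ne_iff.mp h) : ℤ))

/-- The diameter of a subset of the Cantor space with respect to `cdist`. -/
noncomputable def cdiam (s : Set Cantor) : ℝ := sSup (Set.image2 cdist s s)

/-- `X ⊆ 2^ω` has strong measure zero if for every sequence `(εₙ)` of positive reals
there are sets `Xₙ` with `X = ⋃ₙ Xₙ` and `diam Xₙ < εₙ`. -/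
def StrongMeasureZero (X : Set Cantor) : Prop :=
  ∀ ε : ℕ → ℝ, (∀ n, 0 < ε n) →
    ∃ Y : ℕ → Set Cantor, X = ⋃ n, Y n ∧ ∀ n, cdiam (Y n) < ε n

/-- A set has the Baire property if it differs from an open set by a meager set. -/
def HasBaireProperty (S : Set Cantor) : Prop :=
  ∃ U : Set Cantor, IsOpen U ∧ IsMeagre (symmDiff S U)

/-!
By the Galvin–Mycielski–Solovay theorem, `X` has strong measure zero iff every meagre set misses
some coset `z + X`. A selector meets every coset, and a meagre set meeting every coset contains a
selector, which is then meagre. So it remains to see that a selector `S` with the Baire property is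
meagre: otherwise `S` is comeagre in a nonempty open `U`, density gives `0 ≠ x ∈ X` with
`U ∩ (U - x) ≠ ∅`, and on this open set `S` and `S - x` are both comeagre, so they meet and `S`
contains two points `w`, `w + x` of one coset.

For Galvin–Mycielski–Solovay, a strong measure zero `X` is translated into a dense Gδ set `⋂ Uₙ`
by building `z` block by block, moving each cylinder of countably many covers of `X` into one `Uₙ`.
Conversely, for an interval partition `(Iⱼ)` the points that are nonzero on every `Iⱼ` form a
closed nowhere dense set; a translate `z + X` missing it means that every `x ∈ X` agrees with `z`
on some `Iⱼ`, and this for all partitions gives strong measure zero.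
-/

open Filter Topology PiNat

section Selectors

variable {G : Type*} [AddGroup G]

def IsSelector (X : AddSubgroup G) (S : Set G) : Prop :=
  ∀ y : G, ∃! s, s ∈ S ∩ ({y} + (X : Set G))

lemma mem_singleton_add_iff_mk_eq {X : AddSubgroup G} {y s : G} :
    s ∈ ({y} + (X : Set G)) ↔ (y : G ⧸ X) = s := by
  rw [QuotientAddGroup.eq, singleton_add]
  constructor
  · rintro ⟨x, hx, rfl⟩
    rwa [neg_add_cancel_left]
  · exact fun h => ⟨-y + s, h, add_neg_cancel_left y s⟩

lemma IsSelector.eq_zero_of_add_mem {X : AddSubgroup G} {S : Set G} (hS : IsSelector X S)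
    {w x : G} (hw : w ∈ S) (hx : x ∈ X) (hwx : w + x ∈ S) : x = 0 := by
  obtain ⟨s, -, hs⟩ := hS w
  have h₁ := hs w ⟨hw, mem_singleton_add_iff_mk_eq.2 rfl⟩
  have h₂ := hs (w + x) ⟨hwx, Set.add_mem_add rfl hx⟩
  exact add_eq_left.1 (h₂.trans h₁.symm)

lemma exists_isSelector_subset (X : AddSubgroup G) {M : Set G}
    (hM : ∀ y : G, (({y} + (X : Set G)) ∩ M).Nonempty) : ∃ S ⊆ M, IsSelector X S := by
  have (q : G ⧸ X) : ∃ s ∈ M, (s : G ⧸ X) = q := by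
    induction q using QuotientAddGroup.induction_on with
    | H y =>
      obtain ⟨s, hs, hsM⟩ := hM y
      exact ⟨s, hsM, (mem_singleton_add_iff_mk_eq.1 hs).symm⟩
  choose f hfM hf using this
  refine ⟨range f, range_subset_iff.2 hfM, fun y => ⟨f y, ⟨mem_range_self _, ?_⟩, ?_⟩⟩
  · rw [mem_singleton_add_iff_mk_eq, hf]
  · rintro _ ⟨⟨q, rfl⟩, hq⟩
    rw [mem_singleton_add_iff_mk_eq, hf] at hq
    rw [hq]

variable [TopologicalSpace G] [ContinuousAdd G] [BaireSpace G]

lemma exists_mem_and_add_mem_of_isMeagre_diff {S U : Set G} (hU : IsOpen U)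
    (hUS : IsMeagre (U \ S)) {u x : G} (hu : u ∈ U) (hux : u + x ∈ U) :
    ∃ w ∈ S, w + x ∈ S := by
  have hopen : IsOpen (U ∩ (· + x) ⁻¹' U) := hU.inter (hU.preimage (continuous_add_const x))
  have hshift : IsMeagre ((· + x) ⁻¹' (U \ S)) :=
    hUS.preimage_of_isOpenMap (continuous_add_const x) (Homeomorph.addRight x).isOpenMap
  by_contra! h
  refine not_isMeagre_of_isOpen hopen ⟨u, hu, hux⟩ ((hUS.union hshift).mono ?_)
  rintro w ⟨hwU, hwxU⟩
  by_cases hw : w ∈ S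
  · exact Or.inr ⟨hwxU, h w hw⟩
  · exact Or.inl ⟨hwU, hw⟩

theorem IsSelector.isMeagre_of_isMeagre_symmDiff {X : AddSubgroup G}
    (hX : (0 : G) ∈ closure ((X : Set G) \ {0})) {S U : Set G} (hS : IsSelector X S)
    (hU : IsOpen U) (hSU : IsMeagre (symmDiff S U)) : IsMeagre S := by
  obtain rfl | ⟨u, hu⟩ := U.eq_empty_or_nonempty
  · rwa [← bot_eq_empty, symmDiff_bot] at hSU
  obtain ⟨x, hux, hxX, hx0⟩ : ∃ x, u + x ∈ U ∧ x ∈ X ∧ x ≠ 0 :=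
    mem_closure_iff.1 hX _ (hU.preimage (continuous_const_add u))
      (show u + 0 ∈ U by rwa [add_zero])
  obtain ⟨w, hw, hwx⟩ := exists_mem_and_add_mem_of_isMeagre_diff hU
    (hSU.mono fun _ h => Or.inr h) hu hux
  exact absurd (hS.eq_zero_of_add_mem hw hxX hwx) hx0

end Selectors

namespace PiNat

lemma isClosed_cylinder {E : ℕ → Type*} [∀ n, TopologicalSpace (E n)]
    [∀ n, DiscreteTopology (E n)] (x : ∀ n, E n) (n : ℕ) : IsClosed (cylinder x n) := by
  rw [cylinder_eq_pi]
  exact isClosed_set_pi fun i _ => isClosed_discrete _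

lemma add_mem_cylinder {G : Type*} [Add G] {x y a b : ℕ → G} {n : ℕ} (hx : x ∈ cylinder a n)
    (hy : y ∈ cylinder b n) : x + y ∈ cylinder (a + b) n :=
  fun i hi => congrArg₂ (· + ·) (hx i hi) (hy i hi)

end PiNat

lemma IsOpen.exists_cylinder_subset {E : ℕ → Type*} [∀ n, TopologicalSpace (E n)]
    [∀ n, DiscreteTopology (E n)] {U : Set (∀ n, E n)} (hU : IsOpen U) {x : ∀ n, E n}
    (hx : x ∈ U) : ∃ n, cylinder x n ⊆ U := by
  obtain ⟨_, ⟨y, n, rfl⟩, hxy, hyU⟩ :=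
    (isTopologicalBasis_cylinders E).exists_subset_of_mem_open hx hU
  exact ⟨n, mem_cylinder_iff_eq.1 hxy ▸ hyU⟩

instance (x : Cantor) : NeBot (𝓝[≠] x) := by
  rw [← mem_closure_iff_nhdsWithin_neBot, mem_closure_iff]
  intro U hU hx
  obtain ⟨n, hn⟩ := hU.exists_cylinder_subset hx
  exact ⟨Function.update x n (x n + 1), hn (update_mem_cylinder x n _), by simp⟩

lemma cdist_eq_piNat_dist (x y : Cantor) : cdist x y = @dist Cantor PiNat.dist x y := by
  rcases eq_or_ne x y with rfl | h
  · rw [cdist, dif_pos rfl, PiNat.dist_self]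
  rw [PiNat.dist_eq_of_ne h, cdist, dif_neg h, one_div, inv_pow, zpow_neg, zpow_natCast,
    firstDiff_def, dif_pos h]
  congr

lemma mem_cylinder_iff_cdist_le {x y : Cantor} {n : ℕ} :
    y ∈ cylinder x n ↔ cdist y x ≤ (1 / 2) ^ n := by
  rw [cdist_eq_piNat_dist]
  exact mem_cylinder_iff_dist_le

lemma cdist_le_cdiam {s : Set Cantor} {x y : Cantor} (hx : x ∈ s) (hy : y ∈ s) :
    cdist x y ≤ cdiam s := by
  refine le_csSup ⟨1, ?_⟩ (mem_image2_of_mem hx hy)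
  rintro _ ⟨a, -, b, -, rfl⟩
  simpa using mem_cylinder_iff_cdist_le.1 (by simp : a ∈ cylinder b 0)

lemma cdiam_le_of_subset_cylinder {s : Set Cantor} {x : Cantor} {n : ℕ}
    (h : s ⊆ cylinder x n) : cdiam s ≤ (1 / 2) ^ n := by
  refine Real.sSup_le ?_ (by positivity)
  rintro _ ⟨a, ha, b, hb, rfl⟩
  exact mem_cylinder_iff_cdist_le.1 (mem_cylinder_iff_eq.2
    ((mem_cylinder_iff_eq.1 (h ha)).trans (mem_cylinder_iff_eq.1 (h hb)).symm))

theorem strongMeasureZero_iff_cylinder_cover {X : Set Cantor} :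
    StrongMeasureZero X ↔ ∀ m : ℕ → ℕ, ∃ σ : ℕ → Cantor, X ⊆ ⋃ k, cylinder (σ k) (m k) := by
  constructor
  · intro hX m
    obtain ⟨Y, rfl, hY⟩ := hX (fun k => (1 / 2) ^ m k) fun k => by positivity
    have (k : ℕ) : ∃ c, Y k ⊆ cylinder c (m k) := by
      rcases (Y k).eq_empty_or_nonempty with h | ⟨y, hy⟩
      · exact ⟨0, h ▸ empty_subset _⟩
      · exact ⟨y, fun x hx =>
          mem_cylinder_iff_cdist_le.2 ((cdist_le_cdiam hx hy).trans (hY k).le)⟩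
    choose σ hσ using this
    exact ⟨σ, iUnion_mono hσ⟩
  · intro h ε hε
    choose m hm using fun k => exists_pow_lt_of_lt_one (hε k) (by norm_num : (1 / 2 : ℝ) < 1)
    obtain ⟨σ, hσ⟩ := h m
    refine ⟨fun k => X ∩ cylinder (σ k) (m k), ?_, fun k => ?_⟩
    · rw [← inter_iUnion, inter_eq_left.2 hσ]
    · exact (cdiam_le_of_subset_cylinder inter_subset_right).trans_lt (hm k)

lemma exists_uniform_cylinder_subset {U : Set Cantor} (hUo : IsOpen U) (hUd : Dense U) (L : ℕ) :
    ∃ L' ≥ L, ∀ s : Cantor, ∃ t ∈ cylinder s L, cylinder t L' ⊆ U := by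
  let V (N : ℕ) : Set Cantor := {s | ∃ t ∈ cylinder s L, cylinder t N ⊆ U}
  have hVo (N : ℕ) : IsOpen (V N) := by
    refine isOpen_iff_forall_mem_open.2 fun s ⟨t, hts, htU⟩ => ⟨cylinder s L, ?_,
      isOpen_cylinder _ _ _, self_mem_cylinder _ _⟩
    exact fun s' hs' => ⟨t, mem_cylinder_iff_eq.2 ((mem_cylinder_iff_eq.1 hts).trans
      (mem_cylinder_iff_eq.1 hs').symm), htU⟩
  have hV : Monotone V := fun N N' h s ⟨t, hts, htU⟩ => ⟨t, hts, (cylinder_anti t h).trans htU⟩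
  have hcover (s : Cantor) : ∃ N, s ∈ V N := by
    obtain ⟨t, hts, htU⟩ :=
      hUd.inter_open_nonempty _ (isOpen_cylinder _ s L) ⟨s, self_mem_cylinder s L⟩
    obtain ⟨N, hN⟩ := ((isOpen_cylinder _ s L).inter hUo).exists_cylinder_subset ⟨hts, htU⟩
    exact ⟨N, t, hts, hN.trans inter_subset_right⟩
  obtain ⟨N, hN⟩ := isCompact_univ.elim_directed_cover V hVo
    (fun s _ => mem_iUnion.2 (hcover s)) hV.directed_le
  exact ⟨max N L, le_max_right N L, fun s => hV (le_max_left N L) (hN (mem_univ s))⟩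

theorem StrongMeasureZero.exists_forall_add_mem {X : Set Cantor}
    (hX : StrongMeasureZero X) {U : ℕ → Set Cantor} (hUo : ∀ n, IsOpen (U n))
    (hUd : ∀ n, Dense (U n)) : ∃ z, ∀ x ∈ X, ∀ n, z + x ∈ U n := by
  choose E hE T hT hTU using fun n L => exists_uniform_cylinder_subset (hUo n) (hUd n) L
  -- Stage `j` treats the cylinder `τ j`, the `k`-th one of the `n`-th cover for
  -- `(n, k) = j.unpair`: `y (j + 1)` keeps `y j` below `B j` and moves `y (j + 1) + τ j`
  -- into a cylinder of length `B (j + 1)` inside `U n`.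
  let B (j : ℕ) : ℕ := Nat.rec 0 (fun j L => E j.unpair.1 L) j
  choose σ hσ using fun n : ℕ =>
    strongMeasureZero_iff_cylinder_cover.1 hX fun k => B (n.pair k + 1)
  let τ (j : ℕ) : Cantor := σ j.unpair.1 j.unpair.2
  let y (j : ℕ) : Cantor := Nat.rec 0 (fun j yj => T j.unpair.1 (B j) (yj + τ j) - τ j) j
  have hy (j : ℕ) : y (j + 1) + τ j = T j.unpair.1 (B j) (y j + τ j) := sub_add_cancel _ _
  have hanti (j : ℕ) : cylinder (y (j + 1)) (B (j + 1)) ⊆ cylinder (y j) (B j) := by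
    have : y (j + 1) ∈ cylinder (y j) (B j) := by
      have := add_mem_cylinder ((hy j).symm ▸ hT _ _ _) (self_mem_cylinder (-τ j) (B j))
      simpa using this
    rw [← mem_cylinder_iff_eq.1 this]
    exact cylinder_anti _ (hE _ _)
  obtain ⟨z, hz⟩ := IsCompact.nonempty_iInter_of_sequence_nonempty_isCompact_isClosed _ hanti
    (fun j => ⟨y j, self_mem_cylinder _ _⟩) (isClosed_cylinder _ _).isCompact
    (fun j => isClosed_cylinder _ _)
  have hcover : ∀ x ∈ X, ∀ n, ∃ j, j.unpair.1 = n ∧ x ∈ cylinder (τ j) (B (j + 1)) := by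
    intro x hx n
    obtain ⟨k, hk⟩ := mem_iUnion.1 (hσ n hx)
    exact ⟨n.pair k, by simp, by simpa [τ] using hk⟩
  refine ⟨z, fun x hx n => ?_⟩
  obtain ⟨j, rfl, hxj⟩ := hcover x hx n
  exact hTU _ (B j) (y j + τ j) (hy j ▸ add_mem_cylinder (mem_iInter.1 hz (j + 1)) hxj)

theorem StrongMeasureZero.exists_disjoint_singleton_add {X : Set Cantor}
    (hX : StrongMeasureZero X) {M : Set Cantor} (hM : IsMeagre M) :
    ∃ z, Disjoint ({z} + X) M := by
  obtain ⟨t, htM, htG, htd⟩ := mem_residual.1 hM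
  obtain ⟨U, hUo, rfl⟩ := htG.eq_iInter_nat
  obtain ⟨z, hz⟩ := hX.exists_forall_add_mem hUo fun n => htd.mono (iInter_subset U n)
  refine ⟨z, disjoint_left.2 ?_⟩
  rintro _ ⟨_, rfl, x, hx, rfl⟩
  exact htM (mem_iInter.2 (hz x hx))

lemma isMeagre_setOf_forall_exists_ne_zero {b : ℕ → ℕ} (hb : StrictMono b) :
    IsMeagre {w : Cantor | ∀ j, ∃ i ∈ Ico (b j) (b (j + 1)), w i ≠ 0} := by
  have hclosed : IsClosed {w : Cantor | ∀ j, ∃ i ∈ Ico (b j) (b (j + 1)), w i ≠ 0} := by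
    have : {w : Cantor | ∀ j, ∃ i ∈ Ico (b j) (b (j + 1)), w i ≠ 0} =
        ⋂ j, ⋃ i ∈ Ico (b j) (b (j + 1)), (fun w : Cantor => w i) ⁻¹' {0}ᶜ := by
      ext; simp
    rw [this]
    exact isClosed_iInter fun j => (finite_Ico _ _).isClosed_biUnion fun i _ =>
      (isClosed_discrete {0}ᶜ).preimage (continuous_apply i)
  refine IsNowhereDense.isMeagre ?_
  rw [hclosed.isNowhereDense_iff, interior_eq_empty_iff_dense_compl,
    (isTopologicalBasis_cylinders _).dense_iff]
  rintro _ ⟨u, L, rfl⟩ -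
  refine ⟨fun i => if i < b L then u i else 0, fun i hi => if_pos (hi.trans_le (hb.id_le L)), ?_⟩
  intro h
  obtain ⟨i, hi, hi0⟩ := h L
  exact hi0 (if_neg (not_lt.2 hi.1))

theorem strongMeasureZero_of_forall_exists_agree_on_block {X : Set Cantor}
    (h : ∀ b : ℕ → ℕ, StrictMono b →
      ∃ z : Cantor, ∀ x ∈ X, ∃ j, ∀ i ∈ Ico (b j) (b (j + 1)), x i = z i) :
    StrongMeasureZero X := by
  refine strongMeasureZero_iff_cylinder_cover.2 fun m => ?_
  -- The `x ∈ X` are indexed by `key x`, their restriction to the start of the block on which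
  -- they agree with `z`; `b` grows fast enough that this block reaches past `m (key x)`.
  obtain ⟨e, he⟩ := Countable.exists_injective_nat (List (ZMod 2))
  let g (L : ℕ) : ℕ := (List.finite_length_eq (ZMod 2) L).toFinset.sup fun l => m (e l)
  let b (j : ℕ) : ℕ := Nat.rec 0 (fun _ L => max (L + 1) (g L)) j
  have hb : StrictMono b := strictMono_nat_of_lt_succ fun j => lt_max_of_lt_left (lt_add_one _)
  obtain ⟨z, hz⟩ := h b hb
  choose! J hJ using hz
  let key (x : Cantor) : ℕ := e (res x (b (J x)))
  refine ⟨Function.invFunOn key X, fun x hx => mem_iUnion.2 ⟨key x, fun i hi => ?_⟩⟩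
  obtain ⟨hyX, hyx⟩ := Function.invFunOn_pos ⟨x, hx, rfl⟩
  set y := Function.invFunOn key X (key x)
  have hres : res y (b (J y)) = res x (b (J x)) := he hyx
  have hJ' : J y = J x := hb.injective (by simpa using congrArg List.length hres)
  rw [hJ'] at hres
  have hmx : m (key x) ≤ b (J x + 1) :=
    (Finset.le_sup (f := fun l => m (e l))
      ((Set.Finite.mem_toFinset _).2 (res_length x (b (J x))))).trans (le_max_right _ _)
  rcases lt_or_ge i (b (J x)) with hi' | hi'
  · exact (res_eq_res.1 hres hi').symm
  · exact (hJ x hx i ⟨hi', hi.trans_le hmx⟩).trans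
      (hJ y hyX i (hJ' ▸ ⟨hi', hi.trans_le hmx⟩)).symm

theorem strongMeasureZero_iff_forall_isMeagre {X : Set Cantor} :
    StrongMeasureZero X ↔ ∀ M : Set Cantor, IsMeagre M → ∃ z, Disjoint ({z} + X) M := by
  refine ⟨fun hX M hM => hX.exists_disjoint_singleton_add hM, fun h => ?_⟩
  refine strongMeasureZero_of_forall_exists_agree_on_block fun b hb => ?_
  obtain ⟨z, hz⟩ := h _ (isMeagre_setOf_forall_exists_ne_zero hb)
  refine ⟨z, fun x hx => ?_⟩
  obtain ⟨j, hj⟩ : ∃ j, ∀ i ∈ Ico (b j) (b (j + 1)), (z + x) i = 0 := by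
    simpa using disjoint_left.1 hz (Set.add_mem_add rfl hx)
  exact ⟨j, fun i hi => (CharTwo.add_eq_zero.1 (hj i hi)).symm⟩

/-- (Reclaw) For a dense subgroup `X` of `(2^ω, +)`: `X` has strong measure zero iff
every selector of the cosets of `X` does not have the Baire property. -/
theorem strongMeasureZero_iff_selectors_without_baire_property
    (X : AddSubgroup Cantor) (hX : Dense (X : Set Cantor)) :
    StrongMeasureZero (X : Set Cantor) ↔
      ∀ S : Set Cantor,
        (∀ y : Cantor, ∃! s, s ∈ S ∩ ({y} + (X : Set Cantor))) →
        ¬ HasBaireProperty S := by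
  have hX₀ : (0 : Cantor) ∈ closure ((X : Set Cantor) \ {0}) :=
    (hX.sdiff_singleton 0).closure_eq ▸ mem_univ _
  rw [strongMeasureZero_iff_forall_isMeagre]
  constructor
  · rintro h S hS ⟨U, hU, hSU⟩
    obtain ⟨z, hz⟩ := h S (IsSelector.isMeagre_of_isMeagre_symmDiff hX₀ hS hU hSU)
    obtain ⟨s, ⟨hsS, hsz⟩, -⟩ := hS z
    exact disjoint_left.1 hz hsz hsS
  · intro h M hM
    by_contra! hMX
    obtain ⟨S, hSM, hS⟩ :=
      exists_isSelector_subset X fun y => not_disjoint_iff_nonempty_inter.1 (hMX y)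
    refine h S hS ⟨∅, isOpen_empty, ?_⟩
    rw [← bot_eq_empty, symmDiff_bot]
    exact hM.mono hSM
end

section
/- If X ∈ COV(N), then X is strongly meager. -/
open MeasureTheory Set Pointwise
open scoped ENNReal

/-- `X ∈ COV(N)`: for every Borel set `H ⊆ 2^ω × 2^ω` all of whose vertical sections
are null, the sections indexed by `X` do not cover `2^ω`. -/
def CovN (X : Set Cantor) : Prop :=
  ∀ H : Set (Cantor × Cantor), MeasurableSet H →
    (∀ x : Cantor, μ {y | (x, y) ∈ H} = 0) →
    (⋃ x ∈ X, {y | (x, y) ∈ H}) ≠ Set.univ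

/-- Every set in `COV(N)` is strongly meager. -/
theorem stronglyMeager_of_covN (X : Set Cantor) (hX : CovN X) :
    StronglyMeager X := by
  haveI : μ.IsAddLeftInvariant := by unfold μ; infer_instance
  intro H hH hcov
  obtain ⟨G, hHG, hGmeas, hGnull⟩ := exists_measurable_superset_of_null hH
  have hxx : ∀ x : Cantor, x + x = 0 := by
    intro x; funext i; exact CharTwo.add_self_eq_zero _
  refine hX ((fun p : Cantor × Cantor => p.1 + p.2) ⁻¹' G)
    ((measurable_fst.add measurable_snd) hGmeas) (fun x => ?_) ?_
  · show μ ((fun y => x + y) ⁻¹' G) = 0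
    rw [measure_preimage_add]; exact hGnull
  · rw [Set.eq_univ_iff_forall]
    intro y
    have hy : y ∈ X + H := hcov ▸ Set.mem_univ y
    obtain ⟨x, hx, h, hh, rfl⟩ := hy
    refine Set.mem_biUnion hx ?_
    show x + (x + h) ∈ G
    rw [← add_assoc, hxx, zero_add]
    exact hHG hh
end

section
/- If X ∈ COV(M), then X has strong measure zero. -/
open MeasureTheory Set Pointwise
open scoped ENNReal

/-- `X ∈ COV(M)`: for every Borel set `H ⊆ 2^ω × 2^ω` all of whose vertical sections
are meager, the sections indexed by `X` do not cover `2^ω`. -/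
def CovM (X : Set Cantor) : Prop :=
  ∀ H : Set (Cantor × Cantor), MeasurableSet H →
    (∀ x : Cantor, IsMeagre {y | (x, y) ∈ H}) →
    (⋃ x ∈ X, {y | (x, y) ∈ H}) ≠ Set.univ

/-- Every set in `COV(M)` has strong measure zero. -/
theorem strongMeasureZero_of_covM (X : Set Cantor) (hX : CovM X) :
    StrongMeasureZero X := by
  intro ε hε
  -- choose lengths ℓ n ≥ 1 with 2^(-ℓ n) < ε n
  have hch : ∀ n, ∃ k : ℕ, 1 ≤ k ∧ (2 : ℝ) ^ (-(k : ℤ)) < ε n := by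
    intro n
    obtain ⟨k, hk⟩ := exists_pow_lt_of_lt_one (hε n) (by norm_num : (1/2 : ℝ) < 1)
    refine ⟨k + 1, le_add_self, ?_⟩
    have h1 : (2 : ℝ) ^ (-((k+1 : ℕ) : ℤ)) ≤ (2:ℝ) ^ (-(k:ℤ)) := by
      apply zpow_le_zpow_right₀ (by norm_num) (by push_cast; omega)
    have h2 : (2:ℝ) ^ (-(k:ℤ)) = (1/2:ℝ)^k := by
      rw [zpow_neg, zpow_natCast, one_div, inv_pow]
    exact lt_of_le_of_lt (h1.trans_eq h2) hk
  choose ℓ hℓ1 hℓε using hch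
  -- interval start points
  set m : ℕ → ℕ := fun n => ∑ i ∈ Finset.range n, ℓ i with hm
  have hmono : ∀ n, n ≤ m n := by
    intro n
    calc n = ∑ i ∈ Finset.range n, 1 := by simp
    _ ≤ m n := Finset.sum_le_sum fun i _ => hℓ1 i
  -- the Borel set H
  set H : Set (Cantor × Cantor) :=
    ⋂ n, ⋃ i ∈ Finset.range (ℓ n), {p : Cantor × Cantor | p.1 i ≠ p.2 (m n + i)} with hH
  have hMeas : MeasurableSet H := by
    refine MeasurableSet.iInter fun n => MeasurableSet.biUnion (Finset.range (ℓ n)).countable_toSet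
      fun i _ => ?_
    have h1 : Measurable fun p : Cantor × Cantor => p.1 i :=
      (measurable_pi_apply i).comp measurable_fst
    have h2 : Measurable fun p : Cantor × Cantor => p.2 (m n + i) :=
      (measurable_pi_apply _).comp measurable_snd
    exact MeasurableSet.compl (measurableSet_eq_fun h1 h2)
  have hMeager : ∀ x : Cantor, IsMeagre {y | (x, y) ∈ H} := by
    intro x
    rw [isMeagre_iff_countable_union_isNowhereDense]
    refine ⟨{{y | (x, y) ∈ H}}, ?_, countable_singleton _, by simp⟩
    rintro t rfl  -- t = the section
    have hsec : {y : Cantor | (x, y) ∈ H} =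
        ⋂ n, ⋃ i ∈ Finset.range (ℓ n), {y : Cantor | x i ≠ y (m n + i)} := by
      rw [hH]; ext y; simp
    have hclosed : IsClosed {y : Cantor | (x, y) ∈ H} := by
      rw [hsec]
      refine isClosed_iInter fun n => Set.Finite.isClosed_biUnion
        (Finset.range (ℓ n)).finite_toSet fun i _ => ?_
      have : IsOpen ((fun y : Cantor => y (m n + i)) ⁻¹' {x i}) :=
        (isOpen_discrete _).preimage (continuous_apply _)
      have := this.isClosed_compl
      convert this using 1
      ext y; simp [eq_comm]
    rw [hclosed.isNowhereDense_iff]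
    by_contra hne
    obtain ⟨z0, hz0⟩ := nonempty_iff_ne_empty.mpr hne
    obtain ⟨I, u, hIu, hsub⟩ := isOpen_pi_iff.mp isOpen_interior z0 hz0
    set n := I.sup id + 1 with hn
    set z : Cantor := fun j => if m n ≤ j ∧ j < m n + ℓ n then x (j - m n) else z0 j with hz
    have hzI : z ∈ (I : Set ℕ).pi u := by
      intro a ha
      have h1 : a ≤ I.sup id := Finset.le_sup (f := id) ha
      have h2 : a < m n := lt_of_le_of_lt h1 (lt_of_lt_of_le (Nat.lt_succ_self _) (hmono n))
      have : z a = z0 a := by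
        rw [hz]; simp only []
        rw [if_neg (by omega)]
      rw [this]
      exact (hIu a ha).2
    have hzH : (x, z) ∈ H := interior_subset (s := {y : Cantor | (x, y) ∈ H}) (hsub hzI)
    rw [hH] at hzH
    have := mem_iInter.mp hzH n
    simp only [mem_iUnion, Finset.mem_range, mem_setOf_eq] at this
    obtain ⟨i, hi, hne'⟩ := this
    apply hne'
    have : z (m n + i) = x i := by
      rw [hz]; simp only []
      rw [if_pos (by omega)]
      congr 1; omega
    rw [this]
  obtain ⟨y, hy⟩ : ∃ y : Cantor, y ∉ ⋃ x ∈ X, {y | (x, y) ∈ H} := by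
    by_contra h
    push_neg at h
    exact hX H hMeas hMeager (eq_univ_of_forall h)
  -- define the cover
  refine ⟨fun n => {x ∈ X | ∀ i < ℓ n, x i = y (m n + i)}, ?_, ?_⟩
  · apply Subset.antisymm
    · intro x hx
      have : (x, y) ∉ H := fun hmem => hy (mem_biUnion hx hmem)
      rw [hH] at this
      simp only [mem_iInter, mem_iUnion, Finset.mem_range, mem_setOf_eq, not_forall,
        not_exists, not_not] at this
      obtain ⟨n, hn⟩ := this
      exact mem_iUnion.mpr ⟨n, hx, fun i hi => hn i hi⟩
    · exact iUnion_subset fun n x hx => hx.1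
  · intro n
    refine lt_of_le_of_lt ?_ (hℓε n)
    apply Real.sSup_le _ (by positivity)
    rintro r ⟨a, ha, b, hb, rfl⟩
    unfold cdist
    split_ifs with h
    · positivity
    · apply zpow_le_zpow_right₀ (by norm_num)
      simp only [neg_le_neg_iff, Int.ofNat_le, Nat.cast_le]
      rw [Nat.le_find_iff]
      intro i hi
      simp only [ne_eq, not_not]
      rw [ha.2 i hi, hb.2 i hi]
end

section
/- There exists a Borel set H ⊆ 2^ω × 2^ω such that every vertical section H_x = {y : (x,y) ∈ H} is null, and for every null set G ⊆ 2^ω there exists x ∈ 2^ω with G ⊆ H_x. -/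
open MeasureTheory Set Pointwise
open scoped ENNReal

/-!
A null set `G` is covered, for each `n`, by a sequence of clopen sets of total measure at most
`2⁻¹ ^ n`: take an open `U ⊇ G` of small measure and make the countably many clopen subsets of
`U` disjoint. As there are only countably many clopen sets, a point of `ℕ → ℕ → ℕ` can code one
such cover for each `n`; the slice of `H` at a code is the intersection of its covers, or empty
if the `n`-th cover has total measure above `2⁻¹ ^ n`. So every slice is null and every null set
lies in some slice, and a Borel isomorphism `2^ω ≃ᵐ (ℕ → ℕ → ℕ)` moves the codes to `2^ω`.
-/

open Function TopologicalSpace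

theorem uncountable_nat_arrow (α : Type*) [Nontrivial α] : Uncountable (ℕ → α) := by
  obtain ⟨a, b, hab⟩ := exists_pair_ne α
  have : Uncountable (Set ℕ) := uncountable_iff_forall_not_surjective.mpr cantor_surjective
  classical
  refine Injective.uncountable (f := fun (s : Set ℕ) n => if n ∈ s then a else b) ?_
  intro s t hst
  ext n
  have := congrFun hst n
  by_cases hs : n ∈ s <;> by_cases ht : n ∈ t <;> simp_all

section ClopenCover

variable {X : Type*} [TopologicalSpace X] [CompactSpace X] [T2Space X]
  [TotallyDisconnectedSpace X] [SecondCountableTopology X] [MeasurableSpace X]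
  [OpensMeasurableSpace X]

theorem exists_clopens_cover_tsum_le (ν : Measure X) [ν.OuterRegular] {G : Set X}
    (hG : ν G = 0) {ε : ℝ≥0∞} (hε : ε ≠ 0) :
    ∃ c : ℕ → Clopens X, G ⊆ ⋃ k, (c k : Set X) ∧ ∑' k, ν (c k) ≤ ε := by
  obtain ⟨U, hGU, hU, hUε⟩ := G.exists_isOpen_lt_of_lt ε (hG ▸ pos_iff_ne_zero.mpr hε)
  have : Countable (Clopens X) := Clopens.countable_iff_secondCountable.mpr ‹_›
  obtain ⟨f, hf⟩ := (Set.to_countable {V : Clopens X | (V : Set X) ⊆ U}).exists_eq_range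
    ⟨⊥, empty_subset U⟩
  have hUf : ⋃ k, (f k : Set X) = U := by
    refine Subset.antisymm (iUnion_subset fun k => ?_) fun y hy => ?_
    · exact (hf.symm ▸ mem_range_self k : f k ∈ {V : Clopens X | (V : Set X) ⊆ U})
    · obtain ⟨V, hV, hyV, hVU⟩ := compact_exists_isClopen_in_isOpen hU hy
      obtain ⟨k, hk⟩ := hf.subset (show (⟨V, hV⟩ : Clopens X) ∈ _ from hVU)
      exact mem_iUnion.mpr ⟨k, hk ▸ hyV⟩
  let d := disjointed fun k => (f k : Set X)
  have hd : ∀ k, IsClopen (d k) :=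
    fun k => disjointedRec (fun _ i ht => ht.diff (f i).isClopen) (f k).isClopen
  refine ⟨fun k => ⟨d k, hd k⟩, ?_, ?_⟩
  · simpa only [Clopens.coe_mk, d, iUnion_disjointed, hUf] using hGU
  · calc ∑' k, ν (d k) = ν (⋃ k, d k) :=
          (measure_iUnion (disjoint_disjointed _) fun k => (hd k).isOpen.measurableSet).symm
      _ = ν U := by rw [iUnion_disjointed, hUf]
      _ ≤ ε := hUε.le

end ClopenCover

section UniversalNullSet

variable {α : Type*} [MeasurableSpace α] (ν : Measure α) (B : ℕ → Set α)

def universalNullSet : Set ((ℕ → ℕ → ℕ) × α) :=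
  {p | (∀ n, ∑' k, ν (B (p.1 n k)) ≤ 2⁻¹ ^ n) ∧ ∀ n, ∃ k, p.2 ∈ B (p.1 n k)}

theorem measurableSet_universalNullSet (hB : ∀ i, MeasurableSet (B i)) :
    MeasurableSet (universalNullSet ν B) := by
  have hcode : ∀ n k, Measurable fun p : (ℕ → ℕ → ℕ) × α => p.1 n k :=
    fun n k => (measurable_pi_apply k).comp ((measurable_pi_apply n).comp measurable_fst)
  have hweight : ∀ n, Measurable fun p : (ℕ → ℕ → ℕ) × α => ∑' k, ν (B (p.1 n k)) :=
    fun n => .tsum fun k => (measurable_from_nat (f := fun i => ν (B i))).comp (hcode n k)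
  have hmem : Measurable fun q : α × ℕ => q.1 ∈ B q.2 :=
    measurable_from_prod_countable_left fun i => measurableSet_setOfPred.mp (hB i)
  exact measurableSet_setOfPred.mpr <|
    (Measurable.forall fun n => measurableSet_setOfPred.mp <|
      measurableSet_le (hweight n) measurable_const).and
    (Measurable.forall fun n => .exists fun k => hmem.comp (measurable_snd.prodMk (hcode n k)))

theorem measure_slice_universalNullSet (c : ℕ → ℕ → ℕ) :
    ν {y | (c, y) ∈ universalNullSet ν B} = 0 := by
  by_cases hc : ∀ n, ∑' k, ν (B (c n k)) ≤ 2⁻¹ ^ n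
  · refine le_antisymm (ge_of_tendsto' (ENNReal.tendsto_pow_atTop_nhds_zero_of_lt_one
      (by norm_num : (2⁻¹ : ℝ≥0∞) < 1)) fun n => ?_) zero_le
    calc ν {y | (c, y) ∈ universalNullSet ν B}
        ≤ ν (⋃ k, B (c n k)) := measure_mono fun y hy => mem_iUnion.mpr (hy.2 n)
      _ ≤ ∑' k, ν (B (c n k)) := measure_iUnion_le _
      _ ≤ 2⁻¹ ^ n := hc n
  · have hempty : {y | (c, y) ∈ universalNullSet ν B} = ∅ :=
      eq_empty_of_forall_notMem fun y hy => hc hy.1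
    rw [hempty, measure_empty]

theorem exists_subset_slice_universalNullSet {G : Set α}
    (hG : ∀ n : ℕ, ∃ c : ℕ → ℕ, G ⊆ ⋃ k, B (c k) ∧ ∑' k, ν (B (c k)) ≤ 2⁻¹ ^ n) :
    ∃ c, G ⊆ {y | (c, y) ∈ universalNullSet ν B} := by
  choose c hcG hc using hG
  exact ⟨c, fun y hy => ⟨hc, fun n => mem_iUnion.mp (hcG n hy)⟩⟩

end UniversalNullSet

/-- There is a Borel set `H ⊆ 2^ω × 2^ω` with null vertical sections such that every
null set is contained in some vertical section of `H`. -/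
theorem exists_universal_null_set :
    ∃ H : Set (Cantor × Cantor), MeasurableSet H ∧
      (∀ x : Cantor, μ {y | (x, y) ∈ H} = 0) ∧
      (∀ G : Set Cantor, μ G = 0 → ∃ x : Cantor, G ⊆ {y | (x, y) ∈ H}) := by
  have : μ.OuterRegular := by unfold μ; infer_instance
  have : Countable (Clopens Cantor) := Clopens.countable_iff_secondCountable.mpr inferInstance
  obtain ⟨b, hb⟩ := exists_surjective_nat (Clopens Cantor)
  let B : ℕ → Set Cantor := fun i => b i
  let e : Cantor ≃ᵐ (ℕ → ℕ → ℕ) := PolishSpace.measurableEquivOfNotCountable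
    (uncountable_nat_arrow _).not_countable (uncountable_nat_arrow _).not_countable
  refine ⟨Prod.map e id ⁻¹' universalNullSet μ B,
    (measurableSet_universalNullSet μ B fun i => (b i).isOpen.measurableSet).preimage
      (e.measurable.prodMap measurable_id),
    fun x => measure_slice_universalNullSet μ B (e x), fun G hG => ?_⟩
  obtain ⟨c, hc⟩ := exists_subset_slice_universalNullSet μ B fun n => by
    obtain ⟨V, hGV, hV⟩ := exists_clopens_cover_tsum_le μ hG (ε := 2⁻¹ ^ n) (by simp)
    exact ⟨fun k => surjInv hb (V k), by simpa only [B, surjInv_eq hb] using ⟨hGV, hV⟩⟩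
  exact ⟨e.symm c, by simpa using hc⟩
end

section
/- Suppose there exists a family 𝒜 of null subsets of 2^ω with ⋃𝒜 = 2^ω and #𝒜 = ℵ_ω, while every family ℬ of null subsets of 2^ω with #ℬ < ℵ_ω satisfies ⋃ℬ ≠ 2^ω. Then COV(N) is not a σ-ideal: there exists a sequence (Xₙ)_{n∈ℕ} of subsets of 2^ω, each belonging to COV(N), such that ⋃ₙ Xₙ ∉ COV(N). -/
open MeasureTheory Set Pointwise
open scoped ENNReal

/-!
Fix a countable basis `b` of `2^ω`. A point `x ∈ 2^ω` codes the `G_δ` set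
`⋂ k, ⋃ {b m | x ⟨k, m⟩ = 1}`, and the set of pairs `(x, y)` with `y` in the set coded by `x`
is Borel. Keeping only the codes of null sets gives a Borel set `H` with null sections such that,
since null sets have null `G_δ` hulls, every null set lies in some section. Choosing such a code
for each member of a cover `𝒜` of size `ℵ_ω` gives a set of codes not in `COV(N)`; splitting
`𝒜` into countably many pieces of size `< ℵ_ω` splits it into sets that are in `COV(N)`, because
fewer than `ℵ_ω` null sets never cover.
-/

open Cardinal TopologicalSpace

section Coding

variable {α : Type*} (b : ℕ → Set α)

def codedGδ (x : Cantor) : Set α :=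
  ⋂ k, ⋃ (m) (_ : x (Nat.pair k m) = 1), b m

theorem measurableSet_setOf_mem_codedGδ [MeasurableSpace α] (hb : ∀ m, MeasurableSet (b m)) :
    MeasurableSet {p : Cantor × α | p.2 ∈ codedGδ b p.1} := by
  have h : {p : Cantor × α | p.2 ∈ codedGδ b p.1} =
      ⋂ k, ⋃ m, {x : Cantor | x (Nat.pair k m) = 1} ×ˢ b m := by
    ext; simp [codedGδ]
  rw [h]
  exact .iInter fun k => .iUnion fun m =>
    (measurable_pi_apply _ (measurableSet_singleton 1)).prod (hb m)

theorem exists_codedGδ_eq (s : ℕ → Set ℕ) : ∃ x, codedGδ b x = ⋂ k, ⋃ m ∈ s k, b m := by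
  classical
  refine ⟨fun j => if (Nat.unpair j).2 ∈ s (Nat.unpair j).1 then 1 else 0, ?_⟩
  simp [codedGδ, Nat.unpair_pair]

theorem exists_codedGδ_eq_of_isGδ [TopologicalSpace α] (hb : IsTopologicalBasis (range b))
    {G : Set α} (hG : IsGδ G) : ∃ x, codedGδ b x = G := by
  obtain ⟨O, hO, rfl⟩ := hG.eq_iInter_nat
  obtain ⟨x, hx⟩ := exists_codedGδ_eq b fun k => {m | b m ⊆ O k}
  refine ⟨x, hx.trans (iInter_congr fun k => ?_)⟩
  refine (iUnion₂_subset fun m (hm : b m ⊆ O k) => hm).antisymm fun y hy => ?_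
  obtain ⟨_, ⟨m, rfl⟩, hym, hmO⟩ := hb.exists_subset_of_mem_open hy (hO k)
  exact mem_biUnion hmO hym

end Coding

theorem exists_isGδ_superset_measure_eq_zero {α : Type*} [TopologicalSpace α] [MeasurableSpace α]
    {ν : Measure α} [ν.OuterRegular] {s : Set α} (hs : ν s = 0) :
    ∃ G, IsGδ G ∧ s ⊆ G ∧ ν G = 0 := by
  have hO : ∀ n : ℕ, ∃ O, s ⊆ O ∧ IsOpen O ∧ ν O < (n : ℝ≥0∞)⁻¹ := fun n =>
    s.exists_isOpen_lt_of_lt _ (hs ▸ ENNReal.inv_pos.2 (ENNReal.natCast_ne_top n))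
  choose O hsO hOopen hOlt using hO
  refine ⟨⋂ n, O n, .iInter_of_isOpen hOopen, subset_iInter hsO, nonpos_iff_eq_zero.1 ?_⟩
  refine le_of_forall_gt fun c hc => ?_
  obtain ⟨n, hn⟩ := ENNReal.exists_inv_nat_lt hc.ne'
  exact (measure_mono (iInter_subset _ n)).trans_lt ((hOlt n).trans hn)

theorem exists_measurableSet_sections_null_universal {α : Type*} [TopologicalSpace α]
    [SecondCountableTopology α] [MeasurableSpace α] [OpensMeasurableSpace α]
    (ν : Measure α) [ν.OuterRegular] [SFinite ν] :
    ∃ H : Set (Cantor × α), MeasurableSet H ∧ (∀ x, ν {y | (x, y) ∈ H} = 0) ∧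
      ∀ s, ν s = 0 → ∃ x, s ⊆ {y | (x, y) ∈ H} := by
  obtain ⟨b, hb⟩ := exists_seq_basis (α := α)
  have hU := measurableSet_setOf_mem_codedGδ b fun m =>
    (hb.isOpen (mem_range_self m)).measurableSet
  have hnull : MeasurableSet {x | ν (codedGδ b x) = 0} :=
    measurable_measure_prodMk_left hU (measurableSet_singleton 0)
  refine ⟨{p | p.2 ∈ codedGδ b p.1 ∧ ν (codedGδ b p.1) = 0}, hU.inter (measurable_fst hnull),
    fun x => ?_, fun s hs => ?_⟩
  · by_cases hx : ν (codedGδ b x) = 0 <;> simp [hx]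
  · obtain ⟨G, hG, hsG, hG0⟩ := exists_isGδ_superset_measure_eq_zero hs
    obtain ⟨x, rfl⟩ := exists_codedGδ_eq_of_isGδ b hb hG
    exact ⟨x, fun y hy => ⟨hsG hy, hG0⟩⟩

theorem aleph_omega0_le_sum_aleph_nat : ℵ_ Ordinal.omega0 ≤ sum fun n : ℕ => ℵ_ n := by
  rw [aleph_limit Ordinal.isSuccLimit_omega0]
  refine ciSup_le' fun ⟨a, ha⟩ => ?_
  obtain ⟨n, rfl⟩ := Ordinal.lt_omega0.1 ha
  exact le_sum (fun n : ℕ => ℵ_ n) n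

theorem exists_iUnion_eq_univ_mk_lt_aleph_omega0 {ι : Type*} (h : #ι ≤ ℵ_ Ordinal.omega0) :
    ∃ S : ℕ → Set ι, ⋃ n, S n = Set.univ ∧ ∀ n, #(S n) < ℵ_ Ordinal.omega0 := by
  have : #ι ≤ #(Σ n : ℕ, (ℵ_ n).out) := by
    simpa [mk_sigma] using h.trans aleph_omega0_le_sum_aleph_nat
  obtain ⟨f⟩ := this
  refine ⟨fun n => f ⁻¹' range (Sigma.mk n), eq_univ_of_forall fun i => ?_, fun n => ?_⟩
  · exact mem_iUnion.2 ⟨(f i).1, (f i).2, rfl⟩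
  · calc #(f ⁻¹' range (Sigma.mk n)) ≤ #(range (Sigma.mk n)) :=
          mk_preimage_of_injective _ _ f.injective
      _ ≤ #(ℵ_ n).out := mk_range_le
      _ = ℵ_ n := mk_out _
      _ < ℵ_ Ordinal.omega0 := aleph_lt_aleph.2 (Ordinal.natCast_lt_omega0 n)

instance : μ.OuterRegular := by unfold μ; infer_instance

instance : IsFiniteMeasure μ := by unfold μ; infer_instance

theorem covN_of_mk_lt {κ : Cardinal}
    (h : ∀ ℬ : Set (Set Cantor), (∀ B ∈ ℬ, μ B = 0) → #ℬ < κ → ⋃₀ ℬ ≠ Set.univ)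
    {X : Set Cantor} (hX : #X < κ) : CovN X := by
  intro H _ hH
  rw [← sUnion_image]
  exact h _ (forall_mem_image.2 fun x _ => hH x) (mk_image_le.trans_lt hX)

theorem exists_not_covN_range {𝒜 : Set (Set Cantor)} (h𝒜 : ∀ A ∈ 𝒜, μ A = 0)
    (hcover : ⋃₀ 𝒜 = Set.univ) : ∃ f : 𝒜 → Cantor, ¬ CovN (range f) := by
  obtain ⟨H, hH, hHnull, hHuniv⟩ := exists_measurableSet_sections_null_universal μ
  choose f hf using fun A : 𝒜 => hHuniv A (h𝒜 A A.2)
  refine ⟨f, fun hcov => hcov H hH hHnull (eq_univ_of_forall fun y => ?_)⟩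
  obtain ⟨A, hA, hyA⟩ := hcover ▸ mem_univ y
  exact mem_biUnion (mem_range_self ⟨A, hA⟩) (hf _ hyA)

/-- If `cov(N) = ℵ_ω` then `COV(N)` is not a σ-ideal. -/
theorem covN_not_sigma_ideal
    (h1 : ∃ 𝒜 : Set (Set Cantor), (∀ A ∈ 𝒜, μ A = 0) ∧ ⋃₀ 𝒜 = Set.univ ∧
      Cardinal.mk 𝒜 = Cardinal.aleph Ordinal.omega0)
    (h2 : ∀ ℬ : Set (Set Cantor), (∀ B ∈ ℬ, μ B = 0) →
      Cardinal.mk ℬ < Cardinal.aleph Ordinal.omega0 → ⋃₀ ℬ ≠ Set.univ) :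
    ∃ X : ℕ → Set Cantor, (∀ n, CovN (X n)) ∧ ¬ CovN (⋃ n, X n) := by
  obtain ⟨𝒜, h𝒜, hcover, hcard⟩ := h1
  obtain ⟨f, hf⟩ := exists_not_covN_range h𝒜 hcover
  obtain ⟨S, hS, hSlt⟩ := exists_iUnion_eq_univ_mk_lt_aleph_omega0 hcard.le
  refine ⟨fun n => f '' S n, fun n => covN_of_mk_lt h2 (mk_image_le.trans_lt (hSlt n)), ?_⟩
  rwa [← image_iUnion, hS, image_univ]
end

section
/- For every m ∈ ℕ and reals 0 < δ < ε < 1 there exists n ∈ ℕ such that for every finite set I with |I| > n there exists C ⊆ 2^I with 1 − ε − δ ≤ |C|·2^{−|I|} ≤ 1 − ε + δ, and such that for every X ⊆ 2^I with |X| ≤ m, | |⋂_{s ∈ X} (C + s)|·2^{−|I|} − (1 − ε)^{|X|} | < δ. -/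
/-!
Colour the points of `2^I` independently and uniformly with `R` colours and let `C` be the union
of `t ≈ (1 - ε) R` colour classes. For a fixed `X`, the number of `x` with `x - X ⊆ C` is a sum
of `2^|I|` indicators of mean `(t / R)^|X|`. If the elements of `X` already differ on a set `J`
of at most `|X|^2` coordinates, then points agreeing on `J` have pairwise disjoint translates
`x - X`, so inside each of the `2^|J|` classes the indicators are independent. A `2τ`-th moment
bound with `τ ≈ |I| m` makes a deviation of `δ 2^|I|` less likely than `2^(-|I| m)`, which beats
the union bound over the at most `(m + 1) 2^(|I| m)` sets `X`.
-/

open Finset Function Filter Topology Pointwise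

section Counting

theorem card_finsets_card_le (β : Type*) [Fintype β] [Nonempty β] (k : ℕ) :
    #{S : Finset β | #S ≤ k} ≤ (k + 1) * Fintype.card β ^ k := by
  classical
  have hS : ({S : Finset β | #S ≤ k} : Finset _) =
      (range (k + 1)).biUnion fun j ↦ powersetCard j univ := by
    ext S; simp
  calc #{S : Finset β | #S ≤ k}
      ≤ ∑ j ∈ range (k + 1), #(powersetCard j (univ : Finset β)) := hS ▸ card_biUnion_le
    _ ≤ ∑ _j ∈ range (k + 1), Fintype.card β ^ k := by
      refine sum_le_sum fun j hj ↦ ?_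
      rw [card_powersetCard, card_univ]
      exact (Nat.choose_le_pow _ _).trans
        (Nat.pow_le_pow_right Fintype.card_pos (Nat.lt_succ_iff.1 (mem_range.1 hj)))
    _ = (k + 1) * Fintype.card β ^ k := by simp

theorem card_maps_card_image_le (β : Type*) [Fintype β] [Nonempty β] [DecidableEq β] (n k : ℕ) :
    #{φ : Fin n → β | #(univ.image φ) ≤ k} ≤ (k + 1) * Fintype.card β ^ k * k ^ n := by
  have hsub : ({φ : Fin n → β | #(univ.image φ) ≤ k} : Finset _) ⊆
      ({S : Finset β | #S ≤ k} : Finset _).biUnion fun S ↦ Fintype.piFinset fun _ ↦ S := by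
    intro φ hφ
    simp only [mem_filter, mem_univ, true_and] at hφ
    exact mem_biUnion.2 ⟨_, by simpa using hφ, Fintype.mem_piFinset.2 fun j ↦ by simp⟩
  calc _ ≤ ∑ S ∈ ({S : Finset β | #S ≤ k} : Finset _), #(Fintype.piFinset fun _ : Fin n ↦ S) :=
        (card_le_card hsub).trans card_biUnion_le
    _ ≤ ∑ _S ∈ ({S : Finset β | #S ≤ k} : Finset _), k ^ n := by
      refine sum_le_sum fun S hS ↦ ?_
      simp only [Fintype.card_piFinset, prod_const, card_univ, Fintype.card_fin]
      exact Nat.pow_le_pow_left (by simpa using hS) n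
    _ ≤ _ := by
      rw [sum_const, smul_eq_mul]
      exact Nat.mul_le_mul_right _ (card_finsets_card_le β k)

theorem card_image_le_of_forall_exists_ne {β : Type*} [DecidableEq β] {n : ℕ}
    {φ : Fin (2 * n) → β} (h : ∀ j₀, ∃ j ≠ j₀, φ j = φ j₀) : #(univ.image φ) ≤ n := by
  have := mul_card_image_le_card (f := φ) univ 2 fun b hb ↦ by
    obtain ⟨j₀, -, rfl⟩ := mem_image.1 hb
    obtain ⟨j, hj, hφj⟩ := h j₀
    exact one_lt_card.2 ⟨j, by simpa using hφj, j₀, by simp, hj⟩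
  simp only [card_univ, Fintype.card_fin] at this
  omega

theorem exists_forall_notMem_of_sum_card_lt {κ Ω : Type*} [Fintype Ω] [DecidableEq Ω]
    (F : Finset κ) (bad : κ → Finset Ω) (h : ∑ i ∈ F, #(bad i) < Fintype.card Ω) :
    ∃ u, ∀ i ∈ F, u ∉ bad i := by
  obtain ⟨u, -, hu⟩ := exists_mem_notMem_of_card_lt_card (s := F.biUnion bad) (t := univ)
    (card_biUnion_le.trans_lt (h.trans_eq card_univ.symm))
  exact ⟨u, fun i hi hui ↦ hu (mem_biUnion.2 ⟨i, hi, hui⟩)⟩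

end Counting

section Colorings

variable {V α : Type*} [Fintype V] [DecidableEq V] [Fintype α]

theorem sum_prod_apply [Nonempty α] (Y : Finset V) (f : α → ℝ) :
    ∑ u : V → α, ∏ y ∈ Y, f (u y) =
      Fintype.card (V → α) * ((∑ a, f a) / Fintype.card α) ^ #Y := by
  have hα : (Fintype.card α : ℝ) ≠ 0 := Nat.cast_ne_zero.2 Fintype.card_ne_zero
  calc ∑ u : V → α, ∏ y ∈ Y, f (u y)
      = ∑ u : V → α, ∏ y, if y ∈ Y then f (u y) else 1 := by
        simp only [prod_ite_mem, univ_inter]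
    _ = ∏ y : V, ∑ a, if y ∈ Y then f a else 1 :=
        (Fintype.prod_sum fun y (a : α) ↦ if y ∈ Y then f a else 1).symm
    _ = ∏ y : V, Fintype.card α * if y ∈ Y then (∑ a, f a) / Fintype.card α else 1 := by
        refine prod_congr rfl fun y _ ↦ ?_
        split_ifs
        · field_simp
        · simp
    _ = _ := by
        rw [prod_mul_distrib, prod_ite_mem, univ_inter, prod_const, prod_const]
        simp

theorem sum_mul_eq_zero_of_dependsOn_compl {f h : (V → α) → ℝ} {A : Set V}
    [DecidablePred (· ∈ A)] (hf : DependsOn f A) (hh : DependsOn h Aᶜ) (hf0 : ∑ u, f u = 0) :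
    ∑ u, f u * h u = 0 := by
  obtain hΩ | ⟨⟨u₀⟩⟩ := isEmpty_or_nonempty (V → α)
  · simp
  let e := (Equiv.piEquivPiSubtypeProd (· ∈ A) fun _ ↦ α).symm
  let F a := f (e (a, (e.symm u₀).2))
  let H b := h (e ((e.symm u₀).1, b))
  have hfF : ∀ a b, f (e (a, b)) = F a := fun a b ↦ hf fun x hx ↦ by simp [e, hx]
  have hhH : ∀ a b, h (e (a, b)) = H b := fun a b ↦ hh fun x hx ↦ by simp_all [e]
  have : Nonempty ({ x // x ∉ A } → α) := ⟨(e.symm u₀).2⟩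
  have hF0 : ∑ a, F a = 0 := by
    rw [← e.sum_comp, Fintype.sum_prod_type] at hf0
    simp only [hfF, sum_const, card_univ, nsmul_eq_mul, ← mul_sum] at hf0
    exact (mul_eq_zero.1 hf0).resolve_left (Nat.cast_ne_zero.2 Fintype.card_ne_zero)
  rw [← e.sum_comp, Fintype.sum_prod_type]
  simp only [hfF, hhH, ← mul_sum, ← sum_mul, hF0, zero_mul]

variable {β : Type*} {g : β → (V → α) → ℝ} {B : β → Set V}

theorem sum_prod_eq_zero_of_forall_ne {ι : Type*} [Fintype ι] [DecidableEq ι]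
    (hB : Pairwise (Disjoint on B)) (hdep : ∀ b, DependsOn (g b) (B b))
    (hmean : ∀ b, ∑ u, g b u = 0) (φ : ι → β) (j₀ : ι) (hj₀ : ∀ j ≠ j₀, φ j ≠ φ j₀) :
    ∑ u, ∏ j, g (φ j) u = 0 := by
  classical
  simp_rw [← mul_prod_erase univ _ (mem_univ j₀)]
  refine sum_mul_eq_zero_of_dependsOn_compl (A := B (φ j₀)) (hdep _) ?_ (hmean _)
  intro u v huv
  refine prod_congr rfl fun j hj ↦ hdep (φ j) fun x hx ↦ huv x ?_
  exact Set.disjoint_left.1 (hB (hj₀ j (ne_of_mem_erase hj))) hx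

theorem sum_pow_sum_le [Fintype β] [Nonempty β] [DecidableEq β]
    (hB : Pairwise (Disjoint on B)) (hdep : ∀ b, DependsOn (g b) (B b))
    (hmean : ∀ b, ∑ u, g b u = 0) (hbdd : ∀ b u, |g b u| ≤ 1) (τ : ℕ) :
    ∑ u, (∑ b, g b u) ^ (2 * τ) ≤
      (τ + 1) * Fintype.card β ^ τ * τ ^ (2 * τ) * Fintype.card (V → α) := by
  -- Expanding the power, a term in which some value of `φ` is taken only once vanishes.
  have hterm : ∀ φ : Fin (2 * τ) → β, ∑ u, ∏ j, g (φ j) u ≤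
      if #(univ.image φ) ≤ τ then (Fintype.card (V → α) : ℝ) else 0 := by
    intro φ
    split_ifs with hφ
    · calc ∑ u, ∏ j, g (φ j) u ≤ ∑ _u : V → α, (1 : ℝ) :=
            sum_le_sum fun u _ ↦ (le_abs_self _).trans <| by
              rw [abs_prod]; exact prod_le_one (fun _ _ ↦ abs_nonneg _) fun j _ ↦ hbdd _ _
        _ = _ := by simp
    · obtain ⟨j₀, hj₀⟩ : ∃ j₀, ∀ j ≠ j₀, φ j ≠ φ j₀ := by
        by_contra! h
        exact hφ (card_image_le_of_forall_exists_ne h)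
      exact (sum_prod_eq_zero_of_forall_ne hB hdep hmean φ j₀ hj₀).le
  calc ∑ u, (∑ b, g b u) ^ (2 * τ) = ∑ φ : Fin (2 * τ) → β, ∑ u, ∏ j, g (φ j) u := by
        simp_rw [sum_pow', Fintype.piFinset_univ]
        exact sum_comm
    _ ≤ ∑ φ : Fin (2 * τ) → β,
          if #(univ.image φ) ≤ τ then (Fintype.card (V → α) : ℝ) else 0 :=
        sum_le_sum fun φ _ ↦ hterm φ
    _ = #{φ : Fin (2 * τ) → β | #(univ.image φ) ≤ τ} * Fintype.card (V → α) := by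
        rw [sum_ite, sum_const_zero, add_zero, sum_const, nsmul_eq_mul]
    _ ≤ _ := by
        gcongr
        exact_mod_cast card_maps_card_image_le β (2 * τ) τ

theorem card_lt_abs_sum_le [Fintype β] [Nonempty β] [DecidableEq β]
    (hB : Pairwise (Disjoint on B)) (hdep : ∀ b, DependsOn (g b) (B b))
    (hmean : ∀ b, ∑ u, g b u = 0) (hbdd : ∀ b u, |g b u| ≤ 1) {δ : ℝ} (hδ : 0 < δ) (τ : ℕ) :
    (#{u | δ * Fintype.card β < |∑ b, g b u|} : ℝ) ≤
      (τ + 1) * (τ ^ 2 / (δ ^ 2 * Fintype.card β)) ^ τ * Fintype.card (V → α) := by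
  have hβ : (0 : ℝ) < Fintype.card β := Nat.cast_pos.2 Fintype.card_pos
  have hpos : 0 < (δ * Fintype.card β) ^ (2 * τ) := by positivity
  have hmarkov : (#{u | δ * Fintype.card β < |∑ b, g b u|} : ℝ) * (δ * Fintype.card β) ^ (2 * τ)
      ≤ ∑ u, (∑ b, g b u) ^ (2 * τ) := by
    rw [← nsmul_eq_mul, ← sum_const]
    refine (sum_le_sum fun u hu ↦ ?_).trans (sum_le_sum_of_subset_of_nonneg (filter_subset _ _)
      fun u _ _ ↦ (even_two_mul τ).pow_nonneg _)
    rw [← (even_two_mul τ).pow_abs (∑ b, g b u)]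
    exact pow_le_pow_left₀ (by positivity) (mem_filter.1 hu).2.le _
  rw [← le_div_iff₀ hpos] at hmarkov
  refine hmarkov.trans <| ((div_le_div_iff_of_pos_right hpos).2
    (sum_pow_sum_le hB hdep hmean hbdd τ)).trans_eq ?_
  rw [div_pow, mul_pow, mul_pow, ← pow_mul, ← pow_mul, two_mul, pow_add, pow_add, pow_add]
  field_simp

end Colorings

section Translates

variable {W α : Type*} [AddCommGroup W] [Fintype W] [DecidableEq W] [Fintype α] [DecidableEq α]

noncomputable def translateDeviation (T : Finset α) (X : Finset W) (x : W) (u : W → α) : ℝ :=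
  (if ∀ s ∈ X, u (x - s) ∈ T then 1 else 0) - ((#T : ℝ) / Fintype.card α) ^ #X

variable (T : Finset α) (X : Finset W)

theorem sum_translateDeviation (u : W → α) :
    ∑ x, translateDeviation T X x u =
      #{x | ∀ s ∈ X, u (x - s) ∈ T} - ((#T : ℝ) / Fintype.card α) ^ #X * Fintype.card W := by
  simp [translateDeviation, sum_sub_distrib, sum_boole, mul_comm]

theorem sum_translateDeviation_eq_zero [Nonempty α] (x : W) :
    ∑ u, translateDeviation T X x u = 0 := by
  have hind : ∀ u : W → α, (if ∀ s ∈ X, u (x - s) ∈ T then (1 : ℝ) else 0) =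
      ∏ y ∈ X.image (x - ·), if u y ∈ T then 1 else 0 := fun u ↦ by
    rw [prod_image fun _ _ _ _ h ↦ sub_right_injective h, prod_boole]
    congr 1
  simp only [translateDeviation, sum_sub_distrib, hind, sum_const, card_univ, nsmul_eq_mul]
  rw [sum_prod_apply _ fun a ↦ if a ∈ T then (1 : ℝ) else 0,
    card_image_of_injective _ sub_right_injective]
  simp

theorem abs_translateDeviation_le_one (x : W) (u : W → α) :
    |translateDeviation T X x u| ≤ 1 := by
  have hq : (0 : ℝ) ≤ (#T / Fintype.card α) ^ #X := by positivity
  have hq1 : ((#T : ℝ) / Fintype.card α) ^ #X ≤ 1 :=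
    pow_le_one₀ (by positivity) (div_le_one_of_le₀ (mod_cast card_le_univ T) (by positivity))
  rw [translateDeviation, abs_le]
  split_ifs <;> constructor <;> linarith

theorem dependsOn_translateDeviation (x : W) :
    DependsOn (translateDeviation T X x) ((x - ·) '' X) := by
  intro u v huv
  have : (∀ s ∈ X, u (x - s) ∈ T) ↔ ∀ s ∈ X, v (x - s) ∈ T :=
    forall₂_congr fun s hs ↦ by rw [huv _ ⟨s, hs, rfl⟩]
  simp only [translateDeviation, this]

end Translates

section Cube

theorem exists_card_le_sq_forall_eqOn {ι γ : Type*} [DecidableEq ι] (X : Finset (ι → γ)) :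
    ∃ J : Finset ι, #J ≤ #X ^ 2 ∧ ∀ a ∈ X, ∀ b ∈ X, (∀ i ∈ J, a i = b i) → a = b := by
  classical
  choose d hd using fun (p : (ι → γ) × (ι → γ)) (h : p.1 ≠ p.2) ↦ Function.ne_iff.1 h
  refine ⟨(X ×ˢ X).biUnion fun p ↦ if h : p.1 = p.2 then ∅ else {d p h}, ?_, ?_⟩
  · calc _ ≤ ∑ p ∈ X ×ˢ X, #(if h : p.1 = p.2 then ∅ else {d p h}) := card_biUnion_le
      _ ≤ ∑ _p ∈ X ×ˢ X, 1 := sum_le_sum fun p _ ↦ by split_ifs <;> simp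
      _ = #X ^ 2 := by simp [sq]
  · intro a ha b hb hab
    by_contra hne
    exact hd (a, b) hne <| hab _ <| mem_biUnion.2 ⟨(a, b), mem_product.2 ⟨ha, hb⟩, by simp [hne]⟩

variable {ι G α : Type*} [AddCommGroup G]

theorem disjoint_image_sub_of_forall_eq {X : Finset (ι → G)} {J : Finset ι}
    (hJ : ∀ a ∈ X, ∀ b ∈ X, (∀ i ∈ J, a i = b i) → a = b) {x y : ι → G}
    (hxy : ∀ i ∈ J, x i = y i) (hne : x ≠ y) :
    Disjoint ((x - ·) '' (X : Set (ι → G))) ((y - ·) '' X) := by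
  refine Set.disjoint_left.2 ?_
  rintro _ ⟨s, hs, rfl⟩ ⟨t, ht, h⟩
  obtain rfl : t = s := hJ t ht s hs fun i hi ↦ by simpa [hxy i hi] using congrFun h i
  exact hne (sub_left_injective h).symm

variable [Fintype ι] [DecidableEq ι] [Fintype G] [DecidableEq G] [Fintype α] [DecidableEq α]
  [Nonempty α]

theorem card_lt_abs_sum_translateDeviation_le (T : Finset α) {X : Finset (ι → G)} {J : Finset ι}
    (hJ : ∀ a ∈ X, ∀ b ∈ X, (∀ i ∈ J, a i = b i) → a = b) {δ : ℝ} (hδ : 0 < δ) (τ : ℕ) :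
    (#{u | δ * Fintype.card (ι → G) < |∑ x, translateDeviation T X x u|} : ℝ) ≤
      Fintype.card (J → G) * ((τ + 1) *
        (τ ^ 2 / (δ ^ 2 * Fintype.card ({i // i ∉ J} → G))) ^ τ * Fintype.card ((ι → G) → α)) := by
  let e := (Equiv.piEquivPiSubtypeProd (· ∈ J) fun _ ↦ G).symm
  let M := Fintype.card ({i // i ∉ J} → G)
  have hcard : Fintype.card (ι → G) = Fintype.card (J → G) * M := by
    rw [← Fintype.card_prod]; exact Fintype.card_congr e.symm
  have hsplit : ∀ u, ∑ x, translateDeviation T X x u =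
      ∑ a, ∑ b, translateDeviation T X (e (a, b)) u :=
    fun u ↦ by rw [← e.sum_comp, Fintype.sum_prod_type]
  have hdisj : ∀ a, Pairwise (Disjoint on fun b ↦ (e (a, b) - ·) '' (X : Set (ι → G))) :=
    fun a b b' hbb' ↦ disjoint_image_sub_of_forall_eq hJ (fun i hi ↦ by simp [e, hi])
      fun h ↦ hbb' (by simpa using e.injective h)
  have hsub : ({u | δ * Fintype.card (ι → G) < |∑ x, translateDeviation T X x u|} :
        Finset ((ι → G) → α)) ⊆
      univ.biUnion fun a ↦ {u | δ * M < |∑ b, translateDeviation T X (e (a, b)) u|} := by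
    intro u hu
    simp only [mem_filter, mem_univ, true_and, hsplit] at hu
    by_contra! hgood
    simp only [mem_biUnion, mem_univ, mem_filter, true_and, not_exists, not_lt] at hgood
    refine hu.not_ge ((abs_sum_le_sum_abs _ _).trans ((sum_le_sum fun a _ ↦ hgood a).trans ?_))
    simp [hcard, mul_left_comm]
  calc _ ≤ (∑ a : J → G, #{u | δ * M < |∑ b, translateDeviation T X (e (a, b)) u|} : ℝ) := by
        exact_mod_cast (card_le_card hsub).trans card_biUnion_le
    _ ≤ ∑ _a : J → G, (τ + 1) * (τ ^ 2 / (δ ^ 2 * M)) ^ τ * Fintype.card ((ι → G) → α) :=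
        sum_le_sum fun a _ ↦ card_lt_abs_sum_le (hdisj a)
          (fun _ ↦ dependsOn_translateDeviation T X _)
          (fun _ ↦ sum_translateDeviation_eq_zero T X _)
          (fun _ ↦ abs_translateDeviation_le_one T X _) hδ τ
    _ = _ := by rw [sum_const, card_univ, nsmul_eq_mul]

end Cube

theorem eventually_sq_mul_div_two_pow_le (a b : ℕ) {C η : ℝ} (hC : 0 ≤ C) (hη : 0 < η) :
    ∀ᶠ n : ℕ in atTop, ((n * a + b : ℕ) : ℝ) ^ 2 * C / 2 ^ n ≤ η := by
  have hlim : Tendsto (fun n : ℕ ↦ ((a + b : ℕ) : ℝ) ^ 2 * C * ((n : ℝ) ^ 2 / 2 ^ n)) atTop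
      (𝓝 0) := by
    simpa using (tendsto_pow_const_div_const_pow_of_one_lt 2 one_lt_two).const_mul
      (((a + b : ℕ) : ℝ) ^ 2 * C)
  filter_upwards [hlim.eventually (ge_mem_nhds hη), eventually_ge_atTop 1] with n hn hn1
  have hlin : n * a + b ≤ (a + b) * n := by nlinarith
  calc ((n * a + b : ℕ) : ℝ) ^ 2 * C / 2 ^ n ≤ (((a + b) * n : ℕ) : ℝ) ^ 2 * C / 2 ^ n := by
        gcongr
    _ = _ := by push_cast; ring
    _ ≤ η := hn

theorem card_lt_abs_sum_translateDeviation_le_two_pow {ι α : Type*} [Fintype ι] [DecidableEq ι]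
    [Fintype α] [DecidableEq α] [Nonempty α] (T : Finset α) {X : Finset (ι → ZMod 2)} {k τ : ℕ}
    (hX : #X ≤ k) {δ : ℝ} (hδ : 0 < δ)
    (hτ : (τ : ℝ) ^ 2 * (2 ^ k ^ 2 / δ ^ 2) / 2 ^ Fintype.card ι ≤ 1 / 4) :
    (#{u | δ * 2 ^ Fintype.card ι < |∑ x, translateDeviation T X x u|} : ℝ)
      ≤ 2 ^ k ^ 2 / 2 ^ τ * Fintype.card ((ι → ZMod 2) → α) := by
  set n := Fintype.card ι
  obtain ⟨J, hJX, hJ⟩ := exists_card_le_sq_forall_eqOn X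
  have hJk : #J ≤ k ^ 2 := hJX.trans (Nat.pow_le_pow_left hX 2)
  have hJn : #J ≤ n := card_le_univ J
  have hV : (Fintype.card (ι → ZMod 2) : ℝ) = 2 ^ n := by simp [n]
  have hM : (Fintype.card ({i // i ∉ J} → ZMod 2) : ℝ) = 2 ^ (n - #J) := by
    simp [Fintype.card_subtype_compl, n]
  have hJ2 : (Fintype.card (J → ZMod 2) : ℝ) ≤ 2 ^ k ^ 2 := by
    simp only [Fintype.card_fun, ZMod.card, Fintype.card_coe, Nat.cast_pow, Nat.cast_ofNat]
    exact pow_le_pow_right₀ one_le_two hJk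
  have hratio : (τ : ℝ) ^ 2 / (δ ^ 2 * 2 ^ (n - #J)) ≤ 1 / 4 := by
    refine le_trans ?_ hτ
    have h2n : (2 : ℝ) ^ n ≤ 2 ^ (n - #J) * 2 ^ k ^ 2 := by
      rw [← pow_add]; exact pow_le_pow_right₀ one_le_two (by omega)
    rw [div_le_div_iff₀ (by positivity) (by positivity)]
    calc (τ : ℝ) ^ 2 * 2 ^ n ≤ τ ^ 2 * (2 ^ (n - #J) * 2 ^ k ^ 2) := by gcongr
      _ = _ := by field_simp
  have hτ2 : ((τ : ℝ) + 1) * (1 / 4) ^ τ ≤ 1 / 2 ^ τ := by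
    have : ((τ : ℝ) + 1) ≤ 2 ^ τ := by exact_mod_cast Nat.lt_two_pow_self
    rw [div_pow, one_pow, show (4 : ℝ) ^ τ = 2 ^ τ * 2 ^ τ by rw [← mul_pow]; norm_num]
    field_simp
    linarith
  have hdev := card_lt_abs_sum_translateDeviation_le T hJ hδ τ
  rw [hV, hM] at hdev
  refine hdev.trans ?_
  calc _ ≤ (2 : ℝ) ^ k ^ 2 * ((τ + 1) * (1 / 4) ^ τ * Fintype.card ((ι → ZMod 2) → α)) := by
        gcongr
    _ ≤ (2 : ℝ) ^ k ^ 2 * (1 / 2 ^ τ * Fintype.card ((ι → ZMod 2) → α)) := by gcongr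
    _ = _ := by ring

theorem exists_coloring_translates_near (k : ℕ) {α : Type*} [Fintype α] [DecidableEq α]
    [Nonempty α] (T : Finset α) {δ : ℝ} (hδ : 0 < δ) :
    ∃ n₀ : ℕ, ∀ (ι : Type*) [Fintype ι] [DecidableEq ι], n₀ < Fintype.card ι →
      ∃ u : (ι → ZMod 2) → α, ∀ X : Finset (ι → ZMod 2), #X ≤ k →
        |(#{x | ∀ s ∈ X, u (x - s) ∈ T} : ℝ) -
          ((#T : ℝ) / Fintype.card α) ^ #X * 2 ^ Fintype.card ι| ≤ δ * 2 ^ Fintype.card ι := by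
  obtain ⟨n₀, hn₀⟩ := eventually_atTop.1 <| eventually_sq_mul_div_two_pow_le k (k ^ 2 + k + 1)
    (C := 2 ^ k ^ 2 / δ ^ 2) (by positivity) (by norm_num : (0 : ℝ) < 1 / 4)
  refine ⟨n₀, fun ι _ _ hι ↦ ?_⟩
  set n := Fintype.card ι
  set τ := n * k + (k ^ 2 + k + 1)
  let Ω := (ι → ZMod 2) → α
  let family : Finset (Finset (ι → ZMod 2)) := {X | #X ≤ k}
  let bad (X : Finset (ι → ZMod 2)) : Finset Ω :=
    {u | δ * 2 ^ n < |∑ x, translateDeviation T X x u|}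
  have hfamily : (#family : ℝ) ≤ (k + 1) * 2 ^ (n * k) := by
    have := card_finsets_card_le (ι → ZMod 2) k
    simp only [Fintype.card_fun, ZMod.card, ← pow_mul] at this
    exact_mod_cast this
  have hk : (k + 1 : ℝ) < 2 ^ (k + 1) := by exact_mod_cast Nat.lt_two_pow_self
  have hΩ : (0 : ℝ) < Fintype.card Ω := Nat.cast_pos.2 Fintype.card_pos
  have htotal : ∑ X ∈ family, (#(bad X) : ℝ) < Fintype.card Ω :=
    calc ∑ X ∈ family, (#(bad X) : ℝ)
        ≤ ∑ _X ∈ family, 2 ^ k ^ 2 / 2 ^ τ * (Fintype.card Ω : ℝ) :=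
          sum_le_sum fun X hX ↦ card_lt_abs_sum_translateDeviation_le_two_pow T
            (by simpa [family] using hX) hδ (hn₀ n hι.le)
      _ ≤ (k + 1) * 2 ^ (n * k) * (2 ^ k ^ 2 / 2 ^ τ * Fintype.card Ω) := by
          rw [sum_const, nsmul_eq_mul]; gcongr
      _ = (k + 1) / 2 ^ (k + 1) * Fintype.card Ω := by
          simp only [τ, pow_add, pow_one]; field_simp
      _ < Fintype.card Ω := by
          rw [div_mul_eq_mul_div, div_lt_iff₀ (by positivity)]; nlinarith
  obtain ⟨u, hu⟩ := exists_forall_notMem_of_sum_card_lt family bad (by exact_mod_cast htotal)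
  refine ⟨u, fun X hX ↦ not_lt.1 fun h ↦ hu X (by simpa [family] using hX) ?_⟩
  simpa [bad, sum_translateDeviation, n] using h

theorem exists_nat_div_pow_near {p η : ℝ} (hp0 : 0 ≤ p) (hp1 : p ≤ 1) (hη : 0 < η) (k : ℕ) :
    ∃ R t : ℕ, 0 < R ∧ t ≤ R ∧ ∀ j ≤ k, |((t : ℝ) / R) ^ j - p ^ j| < η := by
  have hlim : Tendsto (fun R : ℕ ↦ (⌊p * R⌋₊ : ℝ) / R) atTop (𝓝 p) :=
    (tendsto_nat_floor_mul_div_atTop hp0).comp tendsto_natCast_atTop_atTop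
  have hpow : ∀ᶠ R : ℕ in atTop, ∀ j ∈ range (k + 1), |((⌊p * R⌋₊ : ℝ) / R) ^ j - p ^ j| < η :=
    (eventually_all_finset _).2 fun j _ ↦
      Metric.tendsto_nhds.1 (((continuous_pow j).tendsto p).comp hlim) η hη
  obtain ⟨R, hR, hRpow⟩ := ((eventually_gt_atTop 0).and hpow).exists
  exact ⟨R, ⌊p * R⌋₊, hR, Nat.floor_le_of_le (mul_le_of_le_one_left (Nat.cast_nonneg _) hp1),
    fun j hj ↦ hRpow j (mem_range.2 (Nat.lt_succ_of_le hj))⟩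

theorem exists_finset_translates_near {p δ : ℝ} (hp0 : 0 ≤ p) (hp1 : p ≤ 1) (hδ : 0 < δ)
    (k : ℕ) :
    ∃ n₀ : ℕ, ∀ (ι : Type*) [Fintype ι] [DecidableEq ι], n₀ < Fintype.card ι →
      ∃ C : Finset (ι → ZMod 2), ∀ X : Finset (ι → ZMod 2), #X ≤ k →
        |(#{x | ∀ s ∈ X, x - s ∈ C} : ℝ) / 2 ^ Fintype.card ι - p ^ #X| < δ := by
  obtain ⟨R, t, hR, htR, hpow⟩ := exists_nat_div_pow_near hp0 hp1 (half_pos hδ) k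
  have : NeZero R := ⟨hR.ne'⟩
  obtain ⟨T, -, hT⟩ := exists_subset_card_eq (s := (univ : Finset (Fin R))) (by simpa using htR)
  obtain ⟨n₀, hn₀⟩ := exists_coloring_translates_near k T (half_pos hδ)
  refine ⟨n₀, fun ι _ _ hι ↦ ?_⟩
  obtain ⟨u, hu⟩ := hn₀ ι hι
  refine ⟨({x | u x ∈ T} : Finset _), fun X hX ↦ ?_⟩
  set N : ℝ := ((#{x | ∀ s ∈ X, u (x - s) ∈ T} : ℕ) : ℝ)
  have h2 : (0 : ℝ) < 2 ^ Fintype.card ι := by positivity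
  have hcount : |N / 2 ^ Fintype.card ι - ((t : ℝ) / R) ^ #X| ≤ δ / 2 := by
    have h := hu X hX
    rw [hT, Fintype.card_fin] at h
    rw [div_sub' h2.ne', abs_div, abs_of_pos h2, div_le_iff₀ h2, mul_comm (2 ^ _)]
    exact h
  simp only [mem_filter, mem_univ, true_and]
  calc |N / 2 ^ Fintype.card ι - p ^ #X|
      ≤ |N / 2 ^ Fintype.card ι - ((t : ℝ) / R) ^ #X| + |((t : ℝ) / R) ^ #X - p ^ #X| :=
        abs_sub_le _ _ _
    _ < δ / 2 + δ / 2 := add_lt_add_of_le_of_lt hcount (hpow _ hX)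
    _ = δ := add_halves δ

theorem ncard_biInter_add_singleton {W : Type*} [AddCommGroup W] [Fintype W] [DecidableEq W]
    (C X : Finset W) :
    (⋂ s ∈ (X : Set W), ((C : Set W) + ({s} : Set W))).ncard = #{x | ∀ s ∈ X, x - s ∈ C} := by
  rw [← Set.ncard_coe_finset]
  congr 1
  ext x
  simp [Set.add_singleton, Set.image_add_right, sub_eq_add_neg]

open Set in
/-- Theorem 3.2 of the paper: for every `m` and `0 < δ < ε < 1` there is `n` such that
for every finite index set `I` with `|I| > n` there is `C ⊆ 2^I` of relative size
roughly `1 − ε` such that all families of at most `m` translates of `C` are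
probabilistically independent with error `δ`. -/
theorem exists_independent_translates (m : ℕ) (δ ε : ℝ)
    (hδ0 : 0 < δ) (hδε : δ < ε) (hε1 : ε < 1) :
    ∃ n : ℕ, ∀ (ι : Type) [Fintype ι], n < Fintype.card ι →
      ∃ C : Set (ι → ZMod 2),
        1 - ε - δ ≤ (C.ncard : ℝ) / 2 ^ Fintype.card ι ∧
        (C.ncard : ℝ) / 2 ^ Fintype.card ι ≤ 1 - ε + δ ∧
        ∀ X : Set (ι → ZMod 2), X.ncard ≤ m →
          |((⋂ s ∈ X, (C + {s})).ncard : ℝ) / 2 ^ Fintype.card ι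
            - (1 - ε) ^ X.ncard| < δ := by
  obtain ⟨n₀, hn₀⟩ :=
    exists_finset_translates_near (p := 1 - ε) (by linarith) (by linarith) hδ0 (m + 1)
  refine ⟨n₀, fun ι _ hι ↦ ?_⟩
  classical
  obtain ⟨C, hC⟩ := hn₀ ι hι
  have key : ∀ X : Set (ι → ZMod 2), X.ncard ≤ m + 1 →
      |((⋂ s ∈ X, ((C : Set (ι → ZMod 2)) + {s})).ncard : ℝ) / 2 ^ Fintype.card ι
        - (1 - ε) ^ X.ncard| < δ := by
    intro X hX
    obtain ⟨X, rfl⟩ := X.toFinite.exists_finset_coe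
    rw [ncard_coe_finset] at hX ⊢
    rw [ncard_biInter_add_singleton]
    exact hC X hX
  have hdens := key {0} (by simp)
  simp only [mem_singleton_iff, iInter_iInter_eq_left, Set.add_singleton, add_zero, Set.image_id',
    ncard_singleton, pow_one] at hdens
  refine ⟨C, ?_, ?_, fun X hX ↦ key X (by omega)⟩ <;> linarith [abs_lt.1 hdens]
end

section
/- For every m ∈ ℕ and reals 0 < δ < ε < 1 there exists n ∈ ℕ such that for every finite set I with |I| > n there exists C ⊆ 2^I with 1 − ε − δ ≤ |C|·2^{−|I|} ≤ 1 − ε + δ, and such that for every f ∈ F^I with |dom f| ≤ m, | |(C)^f|·2^{−|I|} − (1 − ε)^{m⁰_f}·ε^{m¹_f} | < δ. -/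
open Set Pointwise

/-- `(C)^f` for a partial two-valued function `f ∈ F^I`, represented by its domain `D`
together with a value function `v` (where `v s = true` codes `f s = 1`):
the intersection over `s ∈ D` of `C + s` when `f s = 0` and of `(C + s)ᶜ` when
`f s = 1`.  For `D = ∅` this is all of `2^I`. -/
def csec {ι : Type} (C D : Set (ι → ZMod 2)) (v : (ι → ZMod 2) → Bool) :
    Set (ι → ZMod 2) :=
  ⋂ s ∈ D, if v s = true then (C + {s})ᶜ else C + {s}

/-- `m⁰_f`, the number of points of the domain where `f` takes the value `0`. -/
noncomputable def m0 {ι : Type} (D : Set (ι → ZMod 2)) (v : (ι → ZMod 2) → Bool) : ℕ :=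
  (D ∩ {s | v s = false}).ncard

/-- `m¹_f`, the number of points of the domain where `f` takes the value `1`. -/
noncomputable def m1 {ι : Type} (D : Set (ι → ZMod 2)) (v : (ι → ZMod 2) → Bool) : ℕ :=
  (D ∩ {s | v s = true}).ncard

/-!
Choose `C ⊆ 2^I` at random, putting each point in independently with probability `1 - ε`.
For a pattern `f`, a point `x` lies in `(C)^f` iff `x + s ∈ C` exactly for the `s ∈ dom f` with
`f s = 0`, so `(C)^f` has expected density `(1 - ε)^{m⁰_f} ε^{m¹_f}`. Splitting `2^I` into the
cosets of the subgroup `H` spanned by `dom f`, the size of `(C)^f` becomes a sum of independent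
terms bounded by `|H| ≤ 2^m`, and Hoeffding's inequality bounds the probability of a deviation
of `δ 2^|I|` by `2 exp(-2 δ² 2^|I| / 2^m)`. As there are only polynomially many (in `2^|I|`)
patterns with `|dom f| ≤ m`, for large `|I|` a union bound leaves some good `C`.
-/

open MeasureTheory ProbabilityTheory Finset

theorem measureReal_pi_le_abs_sum_sub_le {κ Ω : Type*} [Fintype κ] [MeasurableSpace Ω]
    {ν : Measure Ω} [IsProbabilityMeasure ν] {Y : Ω → ℝ} (hY : Measurable Y) {b : ℝ}
    (hYb : ∀ x, Y x ∈ Icc 0 b) {t : ℝ} (ht : 0 ≤ t) :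
    (Measure.pi fun _ : κ => ν).real {ω | t ≤ |∑ k, Y (ω k) - Fintype.card κ * ν[Y]|}
      ≤ 2 * Real.exp (-2 * t ^ 2 / (Fintype.card κ * b ^ 2)) := by
  set μ := Measure.pi fun _ : κ => ν
  have hindep : iIndepFun (fun k ω => Y (ω k) - ν[Y]) μ :=
    iIndepFun_pi (X := fun _ x => Y x - ν[Y]) fun _ => (hY.sub_const _).aemeasurable
  have hmean (k : κ) : μ[fun ω => Y (ω k)] = ν[Y] := by
    rw [← integral_map (measurable_pi_apply k).aemeasurable hY.aestronglyMeasurable,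
      (measurePreserving_eval (fun _ : κ => ν) k).map_eq]
  have hsubG (k : κ) : HasSubgaussianMGF (fun ω => Y (ω k) - ν[Y]) ((‖b - 0‖₊ / 2) ^ 2) μ := by
    have := hasSubgaussianMGF_of_mem_Icc (μ := μ) (X := fun ω => Y (ω k))
      (hY.comp (measurable_pi_apply k)).aemeasurable (ae_of_all _ fun ω => hYb (ω k))
    rwa [hmean] at this
  have hsum := HasSubgaussianMGF.sum_of_iIndepFun hindep (s := univ) fun k _ => hsubG k
  have hS (ω : κ → Ω) : ∑ k, (Y (ω k) - ν[Y]) = ∑ k, Y (ω k) - Fintype.card κ * ν[Y] := by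
    simp [sum_sub_distrib]
  simp only [hS, sum_const, card_univ] at hsum
  have hc : (2 * ((Fintype.card κ • (‖b - 0‖₊ / 2) ^ 2 : NNReal) : ℝ))
      = Fintype.card κ * b ^ 2 / 2 := by
    push_cast
    simp only [sub_zero, Real.norm_eq_abs, div_pow, sq_abs]
    ring
  have hexp : Real.exp (-t ^ 2 / (2 * ((Fintype.card κ • (‖b - 0‖₊ / 2) ^ 2 : NNReal) : ℝ)))
      = Real.exp (-2 * t ^ 2 / (Fintype.card κ * b ^ 2)) := by
    rw [hc]; congr 1; field_simp
  calc μ.real {ω | t ≤ |∑ k, Y (ω k) - Fintype.card κ * ν[Y]|}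
      ≤ μ.real ({ω | t ≤ ∑ k, Y (ω k) - Fintype.card κ * ν[Y]}
          ∪ {ω | t ≤ -(∑ k, Y (ω k) - Fintype.card κ * ν[Y])}) :=
        measureReal_mono fun _ hω => le_abs.1 (Set.mem_ofPred.1 hω)
    _ ≤ _ := measureReal_union_le _ _
    _ ≤ 2 * Real.exp (-2 * t ^ 2 / (Fintype.card κ * b ^ 2)) := by
        rw [two_mul, ← hexp]
        exact add_le_add (hsum.measure_ge_le ht) (hsum.neg.measure_ge_le ht)

theorem measurePreserving_pi_curry_comp {α β γ Ω : Type*} [Fintype α] [Fintype β] [Fintype γ]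
    [MeasurableSpace Ω] [MeasurableSingletonClass Ω] [Countable Ω] (ν : Measure Ω)
    [SigmaFinite ν] (e : α × β ≃ γ) :
    MeasurePreserving (fun ω a b => ω (e (a, b)))
      (Measure.pi fun _ : γ => ν) (Measure.pi fun _ : α => Measure.pi fun _ : β => ν) := by
  refine ⟨.of_discrete, Measure.ext_of_singleton fun d => ?_⟩
  have hpre : (fun (ω : γ → Ω) a b => ω (e (a, b))) ⁻¹' {d}
      = {fun c => d (e.symm c).1 (e.symm c).2} := by
    ext ω
    simp only [Set.mem_preimage, mem_singleton_iff]
    constructor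
    · rintro rfl; simp
    · rintro rfl; simp
  rw [Measure.map_apply .of_discrete (measurableSet_singleton d), hpre, Measure.pi_singleton,
    Measure.pi_singleton, ← e.prod_comp, Fintype.prod_prod_type]
  simp [Measure.pi_singleton]

noncomputable def AddSubgroup.quotientProdEquiv {G : Type*} [AddGroup G] (H : AddSubgroup G) :
    (G ⧸ H) × H ≃ G where
  toFun z := z.1.out + z.2
  invFun x := ((x : G ⧸ H),
    ⟨-(x : G ⧸ H).out + x, QuotientAddGroup.eq.1 (QuotientAddGroup.out_eq' _)⟩)
  left_inv := by
    rintro ⟨k, h⟩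
    have hk : ((k.out + h : G) : G ⧸ H) = k := by
      rw [← QuotientAddGroup.out_eq' k, QuotientAddGroup.eq]; simp
    ext
    · exact hk
    · simp [hk]
  right_inv x := by simp

theorem Submodule.natCard_span_finset_le {K V : Type*} [Field K] [Finite K] [AddCommGroup V]
    [Module K V] (s : Finset V) :
    Nat.card (span K (s : Set V)) ≤ Nat.card K ^ #s := by
  rw [Module.natCard_eq_pow_finrank (K := K)]
  exact Nat.pow_le_pow_right Nat.card_pos (finrank_span_finset_le_card s)

theorem Finset.card_filter_card_le_le {α : Type*} [Fintype α] [Nonempty α] (M : ℕ) :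
    #{A : Finset α | #A ≤ M} ≤ (M + 1) * Fintype.card α ^ M := by
  classical
  have hsub : ({A : Finset α | #A ≤ M} : Finset (Finset α))
      ⊆ (range (M + 1)).biUnion fun k => powersetCard k univ := by
    intro A hA
    simp only [mem_biUnion, mem_range, mem_powersetCard_univ]
    exact ⟨#A, Nat.lt_succ_of_le (Finset.mem_filter.1 hA).2, rfl⟩
  calc #{A : Finset α | #A ≤ M}
      ≤ ∑ k ∈ range (M + 1), #(powersetCard k (univ : Finset α)) :=
        (card_le_card hsub).trans card_biUnion_le
    _ ≤ ∑ _k ∈ range (M + 1), Fintype.card α ^ M := by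
        refine sum_le_sum fun k hk => ?_
        rw [card_powersetCard, card_univ]
        exact (Nat.choose_le_pow _ _).trans
          (Nat.pow_le_pow_right Fintype.card_pos (Nat.lt_succ_iff.1 (mem_range.1 hk)))
    _ = (M + 1) * Fintype.card α ^ M := by rw [sum_const, card_range, smul_eq_mul]

theorem eventually_mul_pow_mul_exp_neg_lt_one (K : ℝ) (k : ℕ) {c : ℝ} (hc : 0 < c) :
    ∀ᶠ y in Filter.atTop, K * y ^ k * Real.exp (-c * y) < 1 := by
  have h := ((tendsto_rpow_mul_exp_neg_mul_atTop_nhds_zero k c hc).const_mul K).eventually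
    (gt_mem_nhds (by norm_num : K * 0 < 1))
  filter_upwards [h] with y hy
  simpa [Real.rpow_natCast, mul_assoc] using hy

section Occurrence

variable {G : Type*} [AddGroup G]

/-- Read `ω` as the indicator of a set `C`; occurrences of `(A, B)` are the points of
`⋂ s ∈ A, C - s` outside `⋃ s ∈ B, C - s`. -/
def IsOccurrence (A B : Finset G) (ω : G → Bool) (x : G) : Prop :=
  (∀ s ∈ A, ω (x + s) = true) ∧ ∀ s ∈ B, ω (x + s) = false

instance (A B : Finset G) (ω : G → Bool) : DecidablePred (IsOccurrence A B ω) :=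
  fun _ => inferInstanceAs (Decidable (_ ∧ _))

theorem isOccurrence_out_add_iff (H : AddSubgroup G) [DecidablePred (· ∈ H)] {A B : Finset G}
    (hA : ∀ s ∈ A, s ∈ H) (hB : ∀ s ∈ B, s ∈ H) (ω : G → Bool) (k : G ⧸ H) (h : H) :
    IsOccurrence A B ω (k.out + h)
      ↔ IsOccurrence (A.subtype (· ∈ H)) (B.subtype (· ∈ H)) (fun h' => ω (k.out + h')) h := by
  simp only [IsOccurrence, mem_subtype, Subtype.forall, AddSubgroup.coe_add, add_assoc]
  exact and_congr ⟨fun h s _ hs => h s hs, fun h s hs => h s (hA s hs) hs⟩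
    ⟨fun h s _ hs => h s hs, fun h s hs => h s (hB s hs) hs⟩

variable [Fintype G]

def occurrenceCount (A B : Finset G) (ω : G → Bool) : ℕ := #{x | IsOccurrence A B ω x}

theorem ncard_setOf_isOccurrence (A B : Finset G) (ω : G → Bool) :
    {x | IsOccurrence A B ω x}.ncard = occurrenceCount A B ω := by
  rw [occurrenceCount, ← ncard_coe_finset, coe_filter]
  simp

theorem occurrenceCount_eq_sum_quotient (H : AddSubgroup G) [Fintype (G ⧸ H)]
    [DecidablePred (· ∈ H)] {A B : Finset G} (hA : ∀ s ∈ A, s ∈ H) (hB : ∀ s ∈ B, s ∈ H)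
    (ω : G → Bool) :
    occurrenceCount A B ω = ∑ k : G ⧸ H,
      occurrenceCount (A.subtype (· ∈ H)) (B.subtype (· ∈ H)) (fun h => ω (k.out + h)) := by
  simp only [occurrenceCount, card_filter]
  rw [← H.quotientProdEquiv.sum_comp, Fintype.sum_prod_type]
  simp [AddSubgroup.quotientProdEquiv, isOccurrence_out_add_iff H hA hB]

variable [DecidableEq G] {ν : Measure Bool} [IsProbabilityMeasure ν] {A B : Finset G}

theorem measureReal_isOccurrence (hAB : Disjoint A B) (x : G) :
    (Measure.pi fun _ : G => ν).real {ω | IsOccurrence A B ω x}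
      = ν.real {true} ^ #A * ν.real {false} ^ #B := by
  have hset : {ω | IsOccurrence A B ω x} = Set.pi ↑((A ∪ B).map (addLeftEmbedding x))
      fun u => if -x + u ∈ A then {true} else {false} := by
    ext ω
    simp only [mem_ofPred_eq, IsOccurrence, mem_pi, coe_map, mem_image, mem_coe,
      Finset.mem_union, addLeftEmbedding_apply, forall_exists_index, and_imp,
      forall_apply_eq_imp_iff₂, neg_add_cancel_left, or_imp, forall_and]
    refine and_congr (forall₂_congr fun s hs => by simp [hs]) (forall₂_congr fun s hs => ?_)
    simp [Finset.disjoint_right.1 hAB hs]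
  rw [hset, measureReal_def, Measure.pi_pi_finset, prod_map, prod_union hAB]
  simp only [addLeftEmbedding_apply, neg_add_cancel_left]
  rw [prod_congr (s₁ := A) rfl (g := fun _ => ν {true}) fun s hs => by rw [if_pos hs],
    prod_congr (s₁ := B) rfl (g := fun _ => ν {false}) fun s hs => by
      rw [if_neg (Finset.disjoint_right.1 hAB hs)]]
  simp [measureReal_def]

theorem integral_occurrenceCount (hAB : Disjoint A B) :
    ∫ ω, (occurrenceCount A B ω : ℝ) ∂(Measure.pi fun _ : G => ν)
      = Fintype.card G * (ν.real {true} ^ #A * ν.real {false} ^ #B) := by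
  have hcount (ω : G → Bool) : (occurrenceCount A B ω : ℝ)
      = ∑ x, Set.indicator {ω | IsOccurrence A B ω x} 1 ω := by
    rw [occurrenceCount, card_filter]
    push_cast
    simp [Set.indicator_apply]
  simp_rw [hcount]
  rw [integral_finsetSum _ fun x _ => (integrable_const 1).indicator .of_discrete]
  simp [sum_congr rfl fun x _ => integral_indicator_one (μ := Measure.pi fun _ : G => ν)
    (.of_discrete (s := {ω | IsOccurrence A B ω x})), measureReal_isOccurrence hAB]

theorem measureReal_le_abs_occurrenceCount_sub_le (H : AddSubgroup G) (hA : ∀ s ∈ A, s ∈ H)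
    (hB : ∀ s ∈ B, s ∈ H) (hAB : Disjoint A B) {t : ℝ} (ht : 0 ≤ t) :
    (Measure.pi fun _ : G => ν).real {ω | t ≤ |(occurrenceCount A B ω : ℝ)
        - Fintype.card G * (ν.real {true} ^ #A * ν.real {false} ^ #B)|}
      ≤ 2 * Real.exp (-2 * t ^ 2 / (Fintype.card G * Nat.card H)) := by
  classical
  set Y : (H → Bool) → ℝ := fun d => occurrenceCount (A.subtype (· ∈ H)) (B.subtype (· ∈ H)) d
  have hcard : Fintype.card G = Fintype.card (G ⧸ H) * Fintype.card H := by
    rw [← Fintype.card_prod, Fintype.card_congr H.quotientProdEquiv]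
  have hmean : ∫ d, Y d ∂(Measure.pi fun _ : H => ν)
      = Fintype.card H * (ν.real {true} ^ #A * ν.real {false} ^ #B) := by
    rw [integral_occurrenceCount (Finset.disjoint_left.2 fun _ hx hx' =>
      Finset.disjoint_left.1 hAB (mem_subtype.1 hx) (mem_subtype.1 hx')),
      ← card_map, subtype_map_of_mem hA, ← card_map (s := B.subtype _), subtype_map_of_mem hB]
  have hset : {ω | t ≤ |(occurrenceCount A B ω : ℝ)
        - Fintype.card G * (ν.real {true} ^ #A * ν.real {false} ^ #B)|}
      = (fun ω k h => ω (H.quotientProdEquiv (k, h))) ⁻¹' {d | t ≤ |∑ k, Y (d k)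
          - Fintype.card (G ⧸ H) * ∫ d, Y d ∂(Measure.pi fun _ : H => ν)|} := by
    ext ω
    simp only [mem_ofPred_eq, Set.mem_preimage, occurrenceCount_eq_sum_quotient H hA hB ω, hmean,
      hcard]
    push_cast
    simp [Y, AddSubgroup.quotientProdEquiv, mul_assoc]
  rw [hset, (measurePreserving_pi_curry_comp ν H.quotientProdEquiv).measureReal_preimage
    MeasurableSet.of_discrete.nullMeasurableSet]
  refine (measureReal_pi_le_abs_sum_sub_le (b := Fintype.card H) .of_discrete
    (fun d => ⟨Nat.cast_nonneg _, Nat.cast_le.2 (card_filter_le _ _)⟩) ht).trans_eq ?_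
  rw [hcard, Nat.card_eq_fintype_card]
  push_cast
  congr 2
  field_simp

end Occurrence

theorem measureReal_le_abs_occurrenceCount_sub_le_of_card_add_card_le {G : Type*}
    [AddCommGroup G] [Module (ZMod 2) G] [Fintype G] [DecidableEq G] {ν : Measure Bool}
    [IsProbabilityMeasure ν] {A B : Finset G} (hAB : Disjoint A B) {M : ℕ} (hM : #A + #B ≤ M)
    {δ : ℝ} (hδ : 0 ≤ δ) :
    (Measure.pi fun _ : G => ν).real {ω | δ * Fintype.card G ≤ |(occurrenceCount A B ω : ℝ)
        - Fintype.card G * (ν.real {true} ^ #A * ν.real {false} ^ #B)|}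
      ≤ 2 * Real.exp (-(2 * δ ^ 2 / 2 ^ M) * Fintype.card G) := by
  set H := (Submodule.span (ZMod 2) ((A ∪ B : Finset G) : Set G)).toAddSubgroup
  have hH : (Nat.card H : ℝ) ≤ 2 ^ M := by
    have := Submodule.natCard_span_finset_le (K := ZMod 2) (A ∪ B)
    rw [Nat.card_zmod] at this
    exact_mod_cast this.trans (Nat.pow_le_pow_right two_pos ((card_union_le A B).trans hM))
  have hH0 : (0 : ℝ) < Nat.card H := by exact_mod_cast Nat.card_pos
  refine (measureReal_le_abs_occurrenceCount_sub_le H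
    (fun s hs => Submodule.subset_span (by simp [hs]))
    (fun s hs => Submodule.subset_span (by simp [hs])) hAB (by positivity)).trans ?_
  refine mul_le_mul_of_nonneg_left (Real.exp_le_exp.2 ?_) zero_le_two
  rw [show -2 * (δ * Fintype.card G) ^ 2 / (Fintype.card G * Nat.card H)
      = -(2 * δ ^ 2 / Nat.card H) * Fintype.card G by field_simp]
  gcongr

theorem exists_forall_abs_occurrenceCount_div_sub_lt {G : Type*} [AddCommGroup G]
    [Module (ZMod 2) G] [Fintype G] [DecidableEq G] (ν : Measure Bool) [IsProbabilityMeasure ν]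
    (M : ℕ) {δ : ℝ} (hδ : 0 ≤ δ)
    (hsmall : ((M + 1) * (Fintype.card G : ℝ) ^ M) ^ 2
      * (2 * Real.exp (-(2 * δ ^ 2 / 2 ^ M) * Fintype.card G)) < 1) :
    ∃ ω : G → Bool, ∀ A B : Finset G, Disjoint A B → #A + #B ≤ M →
      |(occurrenceCount A B ω : ℝ) / Fintype.card G - ν.real {true} ^ #A * ν.real {false} ^ #B|
        < δ := by
  set N : ℝ := (Fintype.card G : ℝ) with hNdef
  have hN : 0 < N := by positivity
  set μ := Measure.pi fun _ : G => ν
  set small : Finset (Finset G) := {A | #A ≤ M}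
  set pairs := (small ×ˢ small).filter fun AB => Disjoint AB.1 AB.2 ∧ #AB.1 + #AB.2 ≤ M
  set bad : Finset G × Finset G → Set (G → Bool) := fun AB => {ω | δ * N ≤
    |(occurrenceCount AB.1 AB.2 ω : ℝ) - N * (ν.real {true} ^ #AB.1 * ν.real {false} ^ #AB.2)|}
  have hpairs : (#pairs : ℝ) ≤ ((M + 1) * N ^ M) ^ 2 := by
    have h : #pairs ≤ #small * #small := (card_filter_le _ _).trans (card_product _ _).le
    have hs : (#small : ℝ) ≤ (M + 1) * N ^ M := by
      rw [hNdef]; exact_mod_cast card_filter_card_le_le M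
    calc (#pairs : ℝ) ≤ #small * #small := by exact_mod_cast h
      _ ≤ ((M + 1) * N ^ M) * ((M + 1) * N ^ M) := mul_le_mul hs hs (by positivity) (by positivity)
      _ = _ := by ring
  have hunion : μ.real (⋃ AB ∈ pairs, bad AB) < 1 :=
    calc μ.real (⋃ AB ∈ pairs, bad AB) ≤ ∑ AB ∈ pairs, μ.real (bad AB) :=
          measureReal_biUnion_finset_le _ _
      _ ≤ ∑ _AB ∈ pairs, 2 * Real.exp (-(2 * δ ^ 2 / 2 ^ M) * N) :=
          sum_le_sum fun AB hAB => by
            obtain ⟨-, hdisj, hcard⟩ := Finset.mem_filter.1 hAB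
            exact measureReal_le_abs_occurrenceCount_sub_le_of_card_add_card_le hdisj hcard hδ
      _ = #pairs * (2 * Real.exp (-(2 * δ ^ 2 / 2 ^ M) * N)) := by rw [sum_const, nsmul_eq_mul]
      _ ≤ ((M + 1) * N ^ M) ^ 2 * (2 * Real.exp (-(2 * δ ^ 2 / 2 ^ M) * N)) := by gcongr
      _ < 1 := hsmall
  obtain ⟨ω, hω⟩ : ∃ ω, ω ∉ ⋃ AB ∈ pairs, bad AB := by
    by_contra! h
    rw [eq_univ_of_forall h, probReal_univ] at hunion
    exact lt_irrefl _ hunion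
  refine ⟨ω, fun A B hdisj hcard => ?_⟩
  have hmem : (A, B) ∈ pairs := by
    simp only [pairs, small, Finset.mem_filter, mem_product, Finset.mem_univ, true_and]
    exact ⟨⟨by omega, by omega⟩, hdisj, hcard⟩
  have hgood : ω ∉ bad (A, B) := fun h => hω (mem_biUnion hmem h)
  simp only [bad, mem_ofPred_eq, not_le] at hgood
  rw [div_sub' hN.ne', abs_div, abs_of_pos hN, div_lt_iff₀ hN]
  linarith

section Csec

variable {ι : Type}

theorem csec_singleton_zero (C : Set (ι → ZMod 2)) : csec C {0} (fun _ => false) = C := by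
  simp [csec]

theorem m0_singleton_zero : m0 {(0 : ι → ZMod 2)} (fun _ => false) = 1 := by simp [m0]

theorem m1_singleton_zero : m1 {(0 : ι → ZMod 2)} (fun _ => false) = 0 := by simp [m1]

variable [Fintype ι] (D : Set (ι → ZMod 2)) (v : (ι → ZMod 2) → Bool)

theorem csec_setOf_eq (ω : (ι → ZMod 2) → Bool) :
    csec {x | ω x = true} D v = {x | IsOccurrence {s ∈ D.toFinite.toFinset | v s = false}
      {s ∈ D.toFinite.toFinset | v s = true} ω x} := by
  ext x
  have hmem (s : ι → ZMod 2) : (x ∈ if v s = true then ({x | ω x = true} + {s})ᶜ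
      else {x | ω x = true} + {s}) ↔ ω (x + s) = !v s := by
    cases v s <;> simp [ZModModule.neg_eq_self]
  simp only [csec, mem_iInter₂, hmem, mem_ofPred_eq, IsOccurrence, Finset.mem_filter,
    Set.Finite.mem_toFinset, and_imp]
  constructor
  · intro h
    exact ⟨fun s hs hv => by simpa [hv] using h s hs, fun s hs hv => by simpa [hv] using h s hs⟩
  · rintro ⟨h0, h1⟩ s hs
    cases hv : v s
    · simpa using h0 s hs hv
    · simpa using h1 s hs hv

theorem m0_eq_card_filter : m0 D v = #{s ∈ D.toFinite.toFinset | v s = false} := by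
  rw [m0, ← ncard_coe_finset]; congr 1; ext; simp

theorem m1_eq_card_filter : m1 D v = #{s ∈ D.toFinite.toFinset | v s = true} := by
  rw [m1, ← ncard_coe_finset]; congr 1; ext; simp

end Csec

theorem exists_forall_abs_ncard_csec_div_sub_lt {ι : Type} [Fintype ι] (ν : Measure Bool)
    [IsProbabilityMeasure ν] (M : ℕ) {δ : ℝ} (hδ : 0 ≤ δ)
    (hsmall : ((M + 1) * (2 ^ Fintype.card ι : ℝ) ^ M) ^ 2
      * (2 * Real.exp (-(2 * δ ^ 2 / 2 ^ M) * 2 ^ Fintype.card ι)) < 1) :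
    ∃ C : Set (ι → ZMod 2), ∀ D v, D.ncard ≤ M →
      |((csec C D v).ncard : ℝ) / 2 ^ Fintype.card ι
        - ν.real {true} ^ m0 D v * ν.real {false} ^ m1 D v| < δ := by
  classical
  have hcard : (Fintype.card (ι → ZMod 2) : ℝ) = 2 ^ Fintype.card ι := by simp
  obtain ⟨ω, hω⟩ := exists_forall_abs_occurrenceCount_div_sub_lt ν M hδ (by rwa [hcard])
  refine ⟨{x | ω x = true}, fun D v hD => ?_⟩
  rw [csec_setOf_eq, ncard_setOf_isOccurrence, m0_eq_card_filter, m1_eq_card_filter, ← hcard]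
  have hdisj : Disjoint {s ∈ D.toFinite.toFinset | v s = false}
      {s ∈ D.toFinite.toFinset | v s = true} :=
    disjoint_filter.2 fun s _ h => by simp [h]
  refine hω _ _ hdisj ?_
  rw [← card_union_of_disjoint hdisj]
  calc _ ≤ #D.toFinite.toFinset :=
        card_le_card (union_subset (filter_subset _ _) (filter_subset _ _))
    _ ≤ M := by rwa [← ncard_eq_toFinset_card]

/-- Theorem 3.1 of the paper. -/
theorem exists_independent_translates_F (m : ℕ) (δ ε : ℝ)
    (hδ0 : 0 < δ) (hδε : δ < ε) (hε1 : ε < 1) :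
    ∃ n : ℕ, ∀ (ι : Type) [Fintype ι], n < Fintype.card ι →
      ∃ C : Set (ι → ZMod 2),
        1 - ε - δ ≤ (C.ncard : ℝ) / 2 ^ Fintype.card ι ∧
        (C.ncard : ℝ) / 2 ^ Fintype.card ι ≤ 1 - ε + δ ∧
        ∀ (D : Set (ι → ZMod 2)) (v : (ι → ZMod 2) → Bool), D.ncard ≤ m →
          |((csec C D v).ncard : ℝ) / 2 ^ Fintype.card ι
            - (1 - ε) ^ m0 D v * ε ^ m1 D v| < δ := by
  -- `max m 1` lets the pattern `D = {0}` through, which controls the density of `C` itself.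
  set M := max m 1
  obtain ⟨n, hn⟩ := Filter.eventually_atTop.1 <|
    (tendsto_pow_atTop_atTop_of_one_lt one_lt_two).eventually
      (eventually_mul_pow_mul_exp_neg_lt_one (2 * (M + 1) ^ 2) (2 * M)
        (by positivity : 0 < 2 * δ ^ 2 / 2 ^ M))
  refine ⟨n, fun ι _ hι => ?_⟩
  set ν := bernoulliMeasure true false ⟨1 - ε, by constructor <;> linarith⟩
  have hνt : ν.real {true} = 1 - ε := by simp [ν]
  have hνf : ν.real {false} = ε := by simp [ν]
  obtain ⟨C, hC⟩ := exists_forall_abs_ncard_csec_div_sub_lt ν M hδ0.le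
    (by convert hn _ hι.le using 1; ring)
  have hdensity := hC {0} (fun _ => false) (by simp [M])
  rw [csec_singleton_zero, m0_singleton_zero, m1_singleton_zero, hνt] at hdensity
  refine ⟨C, by linarith [(abs_lt.1 hdensity).1], by linarith [(abs_lt.1 hdensity).2],
    fun D v hD => ?_⟩
  simpa only [hνt, hνf] using hC D v (hD.trans (le_max_left _ _))
end

section
/- Let I be a finite set, C ⊆ 2^I, 0 < ε < 1, δ > 0, and m ∈ ℕ. If for every X ⊆ 2^I with |X| ≤ m we have | |⋂_{s ∈ X} (C + s)|·2^{−|I|} − (1 − ε)^{|X|} | < δ, then for every f ∈ F^I with |dom f| ≤ m we have | |(C)^f|·2^{−|I|} − (1 − ε)^{m⁰_f}·ε^{m¹_f} | < 2^m·δ. -/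
/-!
Fix `s ∈ dom f` with `f s = 1` and let `f'` be `f` with the value at `s` changed to `0`.
Then `(C)^f` and `(C)^{f'}` split `(C)^{f|dom f \ {s}}` into its parts outside and inside
`C + s`, while `(1-ε)^a ε^{b+1} = (1-ε)^a ε^b - (1-ε)^{a+1} ε^b`.  Induction on `m¹_f`
thus doubles the error at each step, starting from the hypothesis itself when `m¹_f = 0`.
-/

open Set Pointwise

open Function

section Translates

variable {ι : Type} (C : Set (ι → ZMod 2)) {D : Set (ι → ZMod 2)} {v : (ι → ZMod 2) → Bool}
  {s : ι → ZMod 2}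

theorem csec_insert (s : ι → ZMod 2) (D : Set (ι → ZMod 2)) (v : (ι → ZMod 2) → Bool) :
    csec C (insert s D) v = (if v s = true then (C + {s})ᶜ else C + {s}) ∩ csec C D v :=
  biInter_insert s D _

theorem csec_of_forall_false (hv : ∀ t ∈ D, v t = false) :
    csec C D v = ⋂ t ∈ D, (C + {t}) :=
  iInter₂_congr fun t ht => by simp [hv t ht]

theorem csec_update_of_notMem [DecidableEq (ι → ZMod 2)] (hs : s ∉ D) (b : Bool) :
    csec C D (update v s b) = csec C D v :=
  iInter₂_congr fun t ht => by rw [update_of_ne (ne_of_mem_of_not_mem ht hs)]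

theorem m0_update_of_notMem [DecidableEq (ι → ZMod 2)] (hs : s ∉ D) (b : Bool) :
    m0 D (update v s b) = m0 D v := by
  unfold m0
  congr 1
  ext t
  simp +contextual [update_of_ne (ne_of_mem_of_not_mem _ hs)]

theorem m1_update_of_notMem [DecidableEq (ι → ZMod 2)] (hs : s ∉ D) (b : Bool) :
    m1 D (update v s b) = m1 D v := by
  unfold m1
  congr 1
  ext t
  simp +contextual [update_of_ne (ne_of_mem_of_not_mem _ hs)]

theorem m0_insert_of_true (hv : v s = true) : m0 (insert s D) v = m0 D v := by
  rw [m0, m0, insert_inter_of_notMem (by simp [hv])]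

theorem m1_insert_of_false (hv : v s = false) : m1 (insert s D) v = m1 D v := by
  rw [m1, m1, insert_inter_of_notMem (by simp [hv])]

theorem m0_of_forall_false (hv : ∀ t ∈ D, v t = false) : m0 D v = D.ncard := by
  rw [m0, inter_eq_left.mpr (show D ⊆ {t | v t = false} from hv)]

variable [Finite ι]

theorem m0_insert_of_false (hs : s ∉ D) (hv : v s = false) :
    m0 (insert s D) v = m0 D v + 1 := by
  rw [m0, m0, insert_inter_of_mem (show s ∈ {t | v t = false} from hv),
    ncard_insert_of_notMem fun h => hs h.1]

theorem m1_insert_of_true (hs : s ∉ D) (hv : v s = true) :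
    m1 (insert s D) v = m1 D v + 1 := by
  rw [m1, m1, insert_inter_of_mem (show s ∈ {t | v t = true} from hv),
    ncard_insert_of_notMem fun h => hs h.1]

theorem m1_eq_zero_iff : m1 D v = 0 ↔ ∀ t ∈ D, v t = false := by
  rw [m1, ncard_eq_zero, eq_empty_iff_forall_notMem]
  simp

theorem m1_le_ncard : m1 D v ≤ D.ncard :=
  ncard_inter_le_ncard_left _ _

theorem ncard_csec_insert_add_ncard_csec_update [DecidableEq (ι → ZMod 2)] (hs : s ∉ D)
    (hv : v s = true) :
    (csec C (insert s D) v).ncard + (csec C (insert s D) (update v s false)).ncard =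
      (csec C D v).ncard := by
  rw [csec_insert, csec_insert, csec_update_of_notMem C hs, update_self, hv, if_pos rfl,
    if_neg Bool.false_ne_true, inter_comm, ← sdiff_eq, add_comm, inter_comm]
  exact ncard_inter_add_ncard_sdiff_eq_ncard _ _

end Translates

theorem abs_density_csec_sub_lt {ι : Type} [Fintype ι] (C : Set (ι → ZMod 2)) {ε δ : ℝ} {m : ℕ}
    (h : ∀ X : Set (ι → ZMod 2), X.ncard ≤ m →
      |((⋂ s ∈ X, (C + {s})).ncard : ℝ) / 2 ^ Fintype.card ι - (1 - ε) ^ X.ncard| < δ)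
    (D : Set (ι → ZMod 2)) (v : (ι → ZMod 2) → Bool) (hD : D.ncard ≤ m) :
    |((csec C D v).ncard : ℝ) / 2 ^ Fintype.card ι - (1 - ε) ^ m0 D v * ε ^ m1 D v|
      < 2 ^ m1 D v * δ := by
  obtain ⟨b, hb⟩ : ∃ b, m1 D v = b := ⟨_, rfl⟩
  induction b generalizing D v with
  | zero =>
    have hv := m1_eq_zero_iff.mp hb
    simpa [hb, csec_of_forall_false C hv, m0_of_forall_false hv] using h D hD
  | succ b ih =>
    obtain ⟨s, hsD, hvs : v s = true⟩ : (D ∩ {t | v t = true}).Nonempty :=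
      nonempty_of_ncard_ne_zero (by rw [← m1, hb]; omega)
    obtain ⟨D, hs, rfl⟩ : ∃ D', s ∉ D' ∧ insert s D' = D :=
      ⟨D \ {s}, fun h : s ∈ D \ {s} => h.2 rfl,
        by rw [insert_sdiff_singleton, insert_eq_of_mem hsD]⟩
    have hw : update v s false s = false := update_self s false v
    have hbD : m1 D v = b := by rw [m1_insert_of_true hs hvs] at hb; omega
    have hrest := ih D v ((ncard_le_ncard (subset_insert s D)).trans hD) hbD
    have hflip := ih (insert s D) (update v s false) hD
      (by rw [m1_insert_of_false hw, m1_update_of_notMem hs, hbD])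
    rw [hbD] at hrest
    rw [m1_insert_of_false hw, m1_update_of_notMem hs, hbD, m0_insert_of_false hs hw,
      m0_update_of_notMem hs] at hflip
    have hsplit := ncard_csec_insert_add_ncard_csec_update C hs hvs
    rw [hb, m0_insert_of_true hvs]
    calc _ = |((csec C D v).ncard / 2 ^ Fintype.card ι - (1 - ε) ^ m0 D v * ε ^ b)
          - ((csec C (insert s D) (update v s false)).ncard / 2 ^ Fintype.card ι
            - (1 - ε) ^ (m0 D v + 1) * ε ^ b)| := by
            congr 1
            rw [← hsplit]
            push_cast
            ring
      _ ≤ _ := abs_sub _ _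
      _ < 2 ^ b * δ + 2 ^ b * δ := add_lt_add hrest hflip
      _ = 2 ^ (b + 1) * δ := by ring

theorem csec_estimate_of_inter_estimate_general
    (ι : Type) [Fintype ι] (C : Set (ι → ZMod 2)) (ε δ : ℝ) (m : ℕ)
    (hδ0 : 0 < δ)
    (h : ∀ X : Set (ι → ZMod 2), X.ncard ≤ m →
      |((⋂ s ∈ X, (C + {s})).ncard : ℝ) / 2 ^ Fintype.card ι
        - (1 - ε) ^ X.ncard| < δ) :
    ∀ (D : Set (ι → ZMod 2)) (v : (ι → ZMod 2) → Bool), D.ncard ≤ m →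
      |((csec C D v).ncard : ℝ) / 2 ^ Fintype.card ι
        - (1 - ε) ^ m0 D v * ε ^ m1 D v| < 2 ^ m * δ := by
  intro D v hD
  calc _ < 2 ^ m1 D v * δ := abs_density_csec_sub_lt C h D v hD
    _ ≤ 2 ^ m * δ := by
      gcongr
      · norm_num
      · exact m1_le_ncard.trans hD

/-- The approximate-independence condition on intersections of translates implies the
corresponding condition for all `(C)^f` with `|dom f| ≤ m`, with error `2^m·δ`. -/
theorem csec_estimate_of_inter_estimate
    (ι : Type) [Fintype ι] (C : Set (ι → ZMod 2)) (ε δ : ℝ) (m : ℕ)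
    (hε0 : 0 < ε) (hε1 : ε < 1) (hδ0 : 0 < δ)
    (h : ∀ X : Set (ι → ZMod 2), X.ncard ≤ m →
      |((⋂ s ∈ X, (C + {s})).ncard : ℝ) / 2 ^ Fintype.card ι
        - (1 - ε) ^ X.ncard| < δ) :
    ∀ (D : Set (ι → ZMod 2)) (v : (ι → ZMod 2) → Bool), D.ncard ≤ m →
      |((csec C D v).ncard : ℝ) / 2 ^ Fintype.card ι
        - (1 - ε) ^ m0 D v * ε ^ m1 D v| < 2 ^ m * δ :=
  csec_estimate_of_inter_estimate_general ι C ε δ m hδ0 h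
end

section
/- For every n ∈ ℕ, p ∈ [0,1] and real δ > 0, ℙ_{n,p}({ω : |Sₙ(ω) − n·p| ≥ n·δ}) ≤ 2·exp(−n·δ²/4). -/
open MeasureTheory Set
open scoped ENNReal

/-- The product of `n` Bernoulli(`p`) measures on `Fin n → Bool`: each coordinate is
independently `true` with probability `p`. -/
noncomputable def bernoulliPi (n : ℕ) (p : ℝ) (hp : ENNReal.ofReal p ≤ 1) :
    Measure (Fin n → Bool) :=
  Measure.pi fun _ => (PMF.bernoulli (Real.toNNReal p) (ENNReal.coe_le_one_iff.mp hp)).toMeasure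

/-- The number of successes in `ω`. -/
def successes {n : ℕ} (ω : Fin n → Bool) : ℕ :=
  (Finset.univ.filter fun i => ω i = true).card

/-!
The bound is an instance of Hoeffding's inequality. The success indicators are independent and
`[0, 1]`-valued, so by Hoeffding's lemma each centred indicator is sub-Gaussian with variance
proxy `1/4`, and their sum `Sₙ - np` is sub-Gaussian with proxy `n/4`. The Chernoff bound applied
to `Sₙ - np` and to `np - Sₙ` bounds each tail by `exp (-2nδ²) ≤ exp (-nδ²/4)`.
-/

open ProbabilityTheory Real
open scoped NNReal

section Hoeffding

variable {Ω ι : Type*} [MeasurableSpace Ω] {μ : Measure Ω}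

lemma measureReal_abs_sum_ge_le_of_iIndepFun {X : ι → Ω → ℝ} (h_indep : iIndepFun X μ)
    {c : ι → ℝ≥0} {s : Finset ι} (h_subG : ∀ i ∈ s, HasSubgaussianMGF (X i) (c i) μ)
    {ε : ℝ} (hε : 0 ≤ ε) :
    μ.real {ω | ε ≤ |∑ i ∈ s, X i ω|} ≤ 2 * exp (-ε ^ 2 / (2 * ∑ i ∈ s, c i)) := by
  have h_indep_neg : iIndepFun (fun i ↦ -X i) μ :=
    h_indep.comp (fun _ x ↦ -x) fun _ ↦ measurable_neg
  have h_upper := HasSubgaussianMGF.measure_sum_ge_le_of_iIndepFun h_indep h_subG hε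
  have h_lower := HasSubgaussianMGF.measure_sum_ge_le_of_iIndepFun h_indep_neg
    (fun i hi ↦ (h_subG i hi).neg) hε
  simp only [Pi.neg_apply, Finset.sum_neg_distrib] at h_lower
  have h_split : {ω | ε ≤ |∑ i ∈ s, X i ω|}
      = {ω | ε ≤ ∑ i ∈ s, X i ω} ∪ {ω | ε ≤ -∑ i ∈ s, X i ω} :=
    Set.ext fun _ ↦ by simp [le_abs]
  rw [h_split, two_mul]
  exact (measureReal_union_le _ _).trans (add_le_add h_upper h_lower)

lemma measureReal_abs_sum_sub_integral_ge_le_of_mem_Icc [IsProbabilityMeasure μ] [Fintype ι]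
    {X : ι → Ω → ℝ} (h_indep : iIndepFun X μ) (h_meas : ∀ i, Measurable (X i)) {a b : ℝ}
    (h_range : ∀ i ω, X i ω ∈ Set.Icc a b) {ε : ℝ} (hε : 0 ≤ ε) :
    μ.real {ω | ε ≤ |∑ i, X i ω - ∑ i, μ[X i]|}
      ≤ 2 * exp (-2 * ε ^ 2 / (Fintype.card ι * (b - a) ^ 2)) := by
  have h_centered := h_indep.comp (fun i (y : ℝ) ↦ y - μ[X i]) fun _ ↦ measurable_id.sub_const _
  have h_subG (i : ι) : HasSubgaussianMGF (fun ω ↦ X i ω - μ[X i]) ((‖b - a‖₊ / 2) ^ 2) μ :=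
    hasSubgaussianMGF_of_mem_Icc (h_meas i).aemeasurable (ae_of_all _ (h_range i))
  have h := measureReal_abs_sum_ge_le_of_iIndepFun h_centered (s := .univ)
    (fun i _ ↦ h_subG i) hε
  simp only [Function.comp_apply, Finset.sum_sub_distrib, Finset.sum_const, Finset.card_univ,
    nsmul_eq_mul] at h
  convert h using 3
  push_cast
  rw [Real.norm_eq_abs, div_pow, sq_abs, ← mul_div_assoc]
  generalize (Fintype.card ι : ℝ) * (b - a) ^ 2 = d
  ring

end Hoeffding

section BernoulliPi

variable {n : ℕ} {p : ℝ} (hp : ENNReal.ofReal p ≤ 1)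

instance isProbabilityMeasure_bernoulliPi : IsProbabilityMeasure (bernoulliPi n p hp) := by
  unfold bernoulliPi
  infer_instance

lemma successes_eq_sum (ω : Fin n → Bool) :
    (successes ω : ℝ) = ∑ i, if ω i then 1 else 0 := by
  simp [successes, Finset.sum_boole]

lemma iIndepFun_bernoulliPi :
    iIndepFun (fun i (ω : Fin n → Bool) ↦ if ω i then (1 : ℝ) else 0) (bernoulliPi n p hp) :=
  iIndepFun_pi (X := fun _ (b : Bool) ↦ if b then (1 : ℝ) else 0)
    fun _ ↦ Measurable.of_discrete.aemeasurable

lemma integral_bernoulliPi_coord (hp0 : 0 ≤ p) (i : Fin n) :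
    ∫ ω, (if ω i then (1 : ℝ) else 0) ∂bernoulliPi n p hp = p := by
  refine (integral_comp_eval (X := fun _ : Fin n ↦ Bool) (i := i)
    (f := fun b : Bool ↦ if b then (1 : ℝ) else 0)
    Measurable.of_discrete.aestronglyMeasurable).trans ?_
  rw [PMF.integral_eq_sum]
  simp [PMF.bernoulli_apply, hp0]

end BernoulliPi

/-- Two-sided Chernoff-type bound (Theorem 3.3 of the paper):
`ℙ(|Sₙ − np| ≥ nδ) ≤ 2·exp(-nδ²/4)`. -/
theorem bernoulli_two_sided_tail_bound (n : ℕ) (p : ℝ) (hp0 : 0 ≤ p) (hp1 : p ≤ 1)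
    (δ : ℝ) (hδ : 0 < δ) :
    bernoulliPi n p (ENNReal.ofReal_le_one.mpr hp1)
        {ω : Fin n → Bool | (n : ℝ) * δ ≤ |(successes ω : ℝ) - (n : ℝ) * p|}
      ≤ ENNReal.ofReal (2 * Real.exp (-(n * δ ^ 2 / 4))) := by
  have h_hoeffding := measureReal_abs_sum_sub_integral_ge_le_of_mem_Icc
    (iIndepFun_bernoulliPi (n := n) (ENNReal.ofReal_le_one.mpr hp1))
    (fun _ ↦ Measurable.of_discrete) (a := 0) (b := 1) (fun _ _ ↦ by split_ifs <;> simp)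
    (by positivity : 0 ≤ n * δ)
  simp only [integral_bernoulliPi_coord _ hp0, ← successes_eq_sum, Finset.sum_const,
    Finset.card_univ, Fintype.card_fin, nsmul_eq_mul, sub_zero, one_pow, mul_one] at h_hoeffding
  -- `a * a * a⁻¹ = a` holds also at `a = 0`, so `n = 0` needs no separate case.
  have h_exponent : -2 * (n * δ) ^ 2 / n = -(2 * n * δ ^ 2) := by
    rw [show -2 * (n * δ) ^ 2 / n = -2 * δ ^ 2 * (n * n * (n : ℝ)⁻¹) by ring, mul_self_mul_inv]
    ring
  have h_nonneg : 0 ≤ n * δ ^ 2 := by positivity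
  rw [← ofReal_measureReal]
  gcongr
  calc _ ≤ 2 * exp (-2 * (n * δ) ^ 2 / n) := h_hoeffding
    _ ≤ 2 * exp (-(n * δ ^ 2 / 4)) := by rw [h_exponent]; gcongr; linarith
end

section
/- A set X ⊆ 2^ω has strong measure zero if and only if for every meager set F ⊆ 2^ω, X + F ≠ 2^ω. -/
open MeasureTheory Set Pointwise
open scoped ENNReal

/-!
Both directions go through the combinatorial form of strong measure zero: for every
`f : ℕ → ℕ` there are `σ m` such that every `x ∈ X` agrees with some `σ m` below `f m`.

A meagre set `F` is contained in the set of points that eventually differ from a fixed `y` on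
every block `[n k, n (k + 1))` of some interval partition. Cover `X` infinitely often by
`σ k` at length `n (k + 1)` and let `z = σ k + y` on block `k`; then each `z - x` with `x ∈ X`
agrees with `y` on infinitely many blocks, so `z ∉ X + F`.

Conversely, for blocks `[a n, a (n + 1))` the set `F` of points vanishing on no block is closed
and nowhere dense. A point `w ∉ X + F` agrees with each `x ∈ X` on some block, so `X` is
covered by the `2 ^ a n` cylinders of length `a (n + 1)` that follow `w` from `a n` on; when `a`
grows fast enough these fit into the lengths `f m`.
-/

open Filter Function

lemma exists_eqOn_Ico_of_strictMono {α : Type*} {c : ℕ → ℕ} (hc : StrictMono c)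
    (g : ℕ → ℕ → α) : ∃ z : ℕ → α, ∀ k, EqOn z (g k) (Ico (c k) (c (k + 1))) := by
  refine ⟨fun i => g (Nat.findGreatest (c · ≤ i) i) i, fun k i hi => ?_⟩
  suffices Nat.findGreatest (c · ≤ i) i = k by simp only [this]
  have hk : k ≤ i := (hc.id_le k).trans hi.1
  refine le_antisymm ?_ (Nat.le_findGreatest hk hi.1)
  by_contra! hlt
  exact (hc.monotone hlt).not_gt ((Nat.findGreatest_spec (P := (c · ≤ i)) hk hi.1).trans_lt hi.2)

namespace Cantor

section Metric

attribute [local instance] PiNat.dist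

lemma cdist_eq_dist (x y : Cantor) : cdist x y = dist x y := by
  unfold cdist
  split_ifs with h
  · simp [h, PiNat.dist_self]
  · rw [PiNat.dist_eq_of_ne h, PiNat.firstDiff_def, dif_pos h, zpow_neg, zpow_natCast, one_div,
      inv_pow]
    congr

lemma cdist_le_cdiam {s : Set Cantor} {x y : Cantor} (hx : x ∈ s) (hy : y ∈ s) :
    cdist x y ≤ cdiam s :=
  le_csSup ⟨1, by rintro _ ⟨a, -, b, -, rfl⟩; exact cdist_eq_dist a b ▸ PiNat.dist_le_one a b⟩
    (mem_image2_of_mem hx hy)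

lemma eqOn_of_cdiam_lt {s : Set Cantor} {n : ℕ} (h : cdiam s < (1 / 2) ^ n) {x y : Cantor}
    (hx : x ∈ s) (hy : y ∈ s) : EqOn x y (Iio n) := fun _ hi =>
  PiNat.apply_eq_of_dist_lt ((cdist_eq_dist x y ▸ cdist_le_cdiam hx hy).trans_lt h) hi.le

lemma cdiam_le_of_eqOn {s : Set Cantor} {n : ℕ} (h : ∀ x ∈ s, ∀ y ∈ s, EqOn x y (Iio n)) :
    cdiam s ≤ (1 / 2) ^ n :=
  Real.sSup_le (by
    rintro _ ⟨x, hx, y, hy, rfl⟩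
    exact cdist_eq_dist x y ▸ PiNat.mem_cylinder_iff_dist_le.mp fun i hi => h x hx y hy hi)
    (by positivity)

end Metric

theorem strongMeasureZero_iff_forall_exists_cover {X : Set Cantor} :
    StrongMeasureZero X ↔
      ∀ f : ℕ → ℕ, ∃ σ : ℕ → Cantor, ∀ x ∈ X, ∃ m, EqOn x (σ m) (Iio (f m)) := by
  constructor
  · intro hX f
    obtain ⟨Y, rfl, hY⟩ := hX (fun m => (1 / 2) ^ f m) fun m => by positivity
    refine ⟨fun m => Classical.epsilon (· ∈ Y m), fun x hx => ?_⟩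
    obtain ⟨m, hm⟩ := mem_iUnion.mp hx
    exact ⟨m, eqOn_of_cdiam_lt (hY m) hm (Classical.epsilon_spec ⟨x, hm⟩)⟩
  · intro hX ε hε
    choose f hf using fun m => exists_pow_lt_of_lt_one (hε m) (by norm_num : (1 / 2 : ℝ) < 1)
    obtain ⟨σ, hσ⟩ := hX f
    refine ⟨fun m => X ∩ {x | EqOn x (σ m) (Iio (f m))}, ?_,
      fun m => (cdiam_le_of_eqOn ?_).trans_lt (hf m)⟩
    · ext x
      simp only [mem_iUnion, mem_inter_iff, mem_ofPred_eq]
      exact ⟨fun hx => (hσ x hx).imp fun _ h => ⟨hx, h⟩, fun ⟨_, hx, _⟩ => hx⟩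
    · rintro x ⟨-, hx⟩ y ⟨-, hy⟩
      exact hx.trans hy.symm

lemma isOpen_setOf_eqOn (t : Cantor) {s : Set ℕ} (hs : s.Finite) :
    IsOpen {x : Cantor | EqOn x t s} :=
  show IsOpen (s.pi fun i => {t i}) from isOpen_set_pi hs fun _ _ => isOpen_discrete _

lemma exists_eqOn_Ico_subset {U : Set Cantor} (hU : IsOpen U) (hd : Dense U) (N : ℕ) :
    ∃ M, N < M ∧ ∃ t : Cantor, {x | EqOn x t (Ico N M)} ⊆ U := by
  obtain ⟨M, t, ht⟩ : ∃ M, ∃ t : Cantor, {x | EqOn x t (Ico N M)} ⊆ U := by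
    induction N generalizing U with
    | zero =>
      obtain ⟨_, ⟨v, M, rfl⟩, hv, hvU⟩ :=
        (PiNat.isTopologicalBasis_cylinders _).exists_subset_of_mem_open hd.nonempty.some_mem hU
      exact ⟨M, v, fun x hx => hvU fun i hi => hx ⟨i.zero_le, hi⟩⟩
    | succ N ih =>
      -- flipping coordinate `N` moves a point that disagrees with `t` there into the box
      let e : Cantor := Pi.single N 1
      obtain ⟨M, t, ht⟩ := ih (hU.inter (hU.preimage (continuous_add_const e)))
        (hd.inter_of_isOpen_left (hd.preimage (isOpenMap_add_right e)) hU)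
      refine ⟨M, t, fun x hx => ?_⟩
      have hx' : ∀ i ∈ Ico N M, i ≠ N → x i = t i := fun i hi hiN =>
        hx ⟨hi.1.lt_of_ne' hiN, hi.2⟩
      by_cases hxN : x N = t N
      · exact (ht fun i hi => if hiN : i = N then hiN ▸ hxN else hx' i hi hiN).1
      · have hflip : x + e ∈ {x | EqOn x t (Ico N M)} := fun i hi => by
          by_cases hiN : i = N
          · subst hiN
            simpa [e] using (by decide : ∀ a b : ZMod 2, a ≠ b → a + 1 = b) _ _ hxN
          · simpa [e, hiN] using hx' i hi hiN
        have h11 : (1 : ZMod 2) + 1 = 0 := by decide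
        simpa [e, add_assoc, ← Pi.single_add, h11] using (ht hflip).2
  exact ⟨max M (N + 1), by omega, t,
    fun x hx => ht (hx.mono (Ico_subset_Ico_right (le_max_left _ _)))⟩

theorem exists_strictMono_eventually_not_eqOn_of_isMeagre {F : Set Cantor} (hF : IsMeagre F) :
    ∃ n : ℕ → ℕ, StrictMono n ∧ ∃ y : Cantor,
      ∀ x ∈ F, ∀ᶠ k in atTop, ¬EqOn x y (Ico (n k) (n (k + 1))) := by
  obtain ⟨G, hGF, hGδ, hGd⟩ := mem_residual.mp hF
  obtain ⟨U, hUo, rfl⟩ := isGδ_iff_eq_iInter_nat.mp hGδ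
  let V : ℕ → Set Cantor := fun k => ⋂ j ∈ Iic k, U j
  have hV : ∀ k, IsOpen (V k) ∧ Dense (V k) := fun k =>
    ⟨(finite_Iic k).isOpen_biInter fun j _ => hUo j,
      hGd.mono (subset_iInter₂ fun j _ => iInter_subset U j)⟩
  choose M hM t ht using fun k => exists_eqOn_Ico_subset (hV k).1 (hV k).2
  let n : ℕ → ℕ := fun k => Nat.rec 0 (fun k nk => M k nk) k
  have hn : StrictMono n := strictMono_nat_of_lt_succ fun k => hM k (n k)
  obtain ⟨y, hy⟩ := exists_eqOn_Ico_of_strictMono hn fun k => t k (n k)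
  refine ⟨n, hn, y, fun x hx => ?_⟩
  obtain ⟨m, hm⟩ : ∃ m, x ∉ U m := by
    by_contra! h
    exact hGF (mem_iInter.mpr h) hx
  filter_upwards [eventually_ge_atTop m] with k hk hxy
  exact hm (iInter₂_subset (s := fun j _ => U j) m hk (ht k (n k) (hxy.trans (hy k))))

lemma exists_frequently_cover {X : Set Cantor}
    (hX : ∀ f : ℕ → ℕ, ∃ σ : ℕ → Cantor, ∀ x ∈ X, ∃ m, EqOn x (σ m) (Iio (f m))) (f : ℕ → ℕ) :
    ∃ σ : ℕ → Cantor, ∀ x ∈ X, ∃ᶠ m in atTop, EqOn x (σ m) (Iio (f m)) := by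
  choose σ hσ using fun i => hX fun j => f (Nat.pair i j)
  refine ⟨fun m => σ m.unpair.1 m.unpair.2, fun x hx => frequently_atTop.mpr fun i => ?_⟩
  obtain ⟨j, hj⟩ := hσ i x hx
  exact ⟨Nat.pair i j, Nat.left_le_pair i j, by simpa only [Nat.unpair_pair] using hj⟩

theorem add_ne_univ_of_isMeagre {X F : Set Cantor}
    (hX : ∀ f : ℕ → ℕ, ∃ σ : ℕ → Cantor, ∀ x ∈ X, ∃ m, EqOn x (σ m) (Iio (f m)))
    (hF : IsMeagre F) : X + F ≠ univ := by
  obtain ⟨n, hn, y, hy⟩ := exists_strictMono_eventually_not_eqOn_of_isMeagre hF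
  obtain ⟨σ, hσ⟩ := exists_frequently_cover hX fun k => n (k + 1)
  obtain ⟨z, hz⟩ := exists_eqOn_Ico_of_strictMono hn fun k => σ k + y
  refine (ne_univ_iff_exists_notMem _).mpr ⟨z, fun hzXF => ?_⟩
  obtain ⟨x, hx, u, hu, rfl⟩ := mem_add.mp hzXF
  obtain ⟨k, hxk, huk⟩ := ((hσ x hx).and_eventually (hy u hu)).exists
  refine huk fun i hi => add_left_cancel (a := x i) ?_
  rw [← Pi.add_apply, hz k hi, Pi.add_apply, hxk (Ico_subset_Iio_self hi)]

lemma isMeagre_setOf_forall_not_eqOn (t : Cantor) {s : ℕ → Set ℕ} (hs : ∀ n, (s n).Finite)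
    (hsN : ∀ N, ∃ n, s n ⊆ Ici N) : IsMeagre {u : Cantor | ∀ n, ¬EqOn u t (s n)} := by
  have hcl : IsClosed {u : Cantor | ∀ n, ¬EqOn u t (s n)} := by
    simp only [ofPred_forall]
    exact isClosed_iInter fun n => (isOpen_setOf_eqOn t (hs n)).isClosed_compl
  refine IsNowhereDense.isMeagre ?_
  rw [hcl.isNowhereDense_iff, interior_eq_empty_iff_dense_compl,
    (PiNat.isTopologicalBasis_cylinders _).dense_iff]
  rintro _ ⟨v, N, rfl⟩ -
  obtain ⟨n, hn⟩ := hsN N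
  exact ⟨piecewise (Iio N) v t, fun i hi => piecewise_eq_of_mem _ _ _ hi,
    fun h => h n fun i hi => piecewise_eq_of_notMem _ _ _ (notMem_Iio.mpr (hn hi))⟩

def binaryDigits (j : ℕ) : Cantor := fun i => ((j / 2 ^ i : ℕ) : ZMod 2)

lemma exists_lt_two_pow_eqOn_binaryDigits (x : Cantor) (a : ℕ) :
    ∃ j < 2 ^ a, EqOn (binaryDigits j) x (Iio a) := by
  let p : Fin a → Fin 2 := fun i => x i
  refine ⟨finFunctionFinEquiv p, (finFunctionFinEquiv p).isLt, fun i hi => ?_⟩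
  have := finFunctionFinEquiv_symm_apply_val (finFunctionFinEquiv p) ⟨i, hi⟩
  rw [Equiv.symm_apply_apply] at this
  rw [binaryDigits, ← ZMod.natCast_mod, ← this]
  exact ZMod.natCast_zmod_val (x i)

theorem exists_cover_of_add_isMeagre_ne_univ {X : Set Cantor}
    (hX : ∀ F : Set Cantor, IsMeagre F → X + F ≠ univ) (f : ℕ → ℕ) :
    ∃ σ : ℕ → Cantor, ∀ x ∈ X, ∃ m, EqOn x (σ m) (Iio (f m)) := by
  -- Index blocks `[c n, c (n + 1))` of length `2 ^ a n`, one index per prefix of length `a n`,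
  -- where `a (n + 1)` bounds `f` on the block.
  let g : ℕ → ℕ := fun k => (Finset.range k).sup f + k
  let c : ℕ → ℕ := fun n => Nat.rec 0 (fun _ cn => cn + 2 ^ g cn) n
  let a : ℕ → ℕ := fun n => g (c n)
  have hc : StrictMono c :=
    strictMono_nat_of_lt_succ fun n => Nat.lt_add_of_pos_right (Nat.two_pow_pos _)
  have hfa : ∀ n m, m < c (n + 1) → f m ≤ a (n + 1) := fun n m hm =>
    (Finset.le_sup (Finset.mem_range.mpr hm)).trans (Nat.le_add_right _ _)
  obtain ⟨w, hw⟩ := (ne_univ_iff_exists_notMem _).mp <| hX _ <|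
    isMeagre_setOf_forall_not_eqOn 0 (fun n => finite_Ico (a n) (a (n + 1)))
      fun N => ⟨N, fun i hi => ((hc.id_le N).trans (Nat.le_add_left _ _)).trans hi.1⟩
  have hXw : ∀ x ∈ X, ∃ n, EqOn x w (Ico (a n) (a (n + 1))) := by
    intro x hx
    by_contra! h
    refine hw (mem_add.mpr ⟨x, hx, w - x, fun n hn => h n fun i hi => ?_, add_sub_cancel x w⟩)
    exact (sub_eq_zero.mp (hn hi)).symm
  obtain ⟨σ, hσ⟩ := exists_eqOn_Ico_of_strictMono hc fun n m =>
    fun i => if i < a n then binaryDigits (m - c n) i else w i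
  refine ⟨σ, fun x hx => ?_⟩
  obtain ⟨n, hn⟩ := hXw x hx
  obtain ⟨j, hj, hjx⟩ := exists_lt_two_pow_eqOn_binaryDigits x (a n)
  have hm : c n + j ∈ Ico (c n) (c (n + 1)) := ⟨Nat.le_add_right _ _, Nat.add_lt_add_left hj _⟩
  refine ⟨c n + j, fun i hi => ?_⟩
  rw [hσ n hm]
  dsimp only
  rw [Nat.add_sub_cancel_left]
  split_ifs with hia
  · exact (hjx hia).symm
  · exact hn ⟨not_lt.mp hia, lt_of_lt_of_le hi (hfa n _ hm.2)⟩

end Cantor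

/-- (Galvin–Mycielski–Solovay) `X` has strong measure zero iff `X + F ≠ 2^ω` for
every meager set `F`. -/
theorem strongMeasureZero_iff_add_meager_ne_univ (X : Set Cantor) :
    StrongMeasureZero X ↔ ∀ F : Set Cantor, IsMeagre F → X + F ≠ Set.univ := by
  rw [Cantor.strongMeasureZero_iff_forall_exists_cover]
  exact ⟨fun hX _ hF => Cantor.add_ne_univ_of_isMeagre hX hF,
    Cantor.exists_cover_of_add_isMeagre_ne_univ⟩
end
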